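/- arXiv:2206.10049 — 9 statements merged into one kernel-verified Lean document; each statement's English description precedes it below -/
import Mathlib

section
/- Let A ∈ F_q^{d×a}, B₁ ∈ F_q^{d×b₁}, B₂ ∈ F_q^{d×b₂} be matrices of full column rank. Let r₁ = rk([B₁,A]) − rk(A), r₂ = rk([B₂,A]) − rk(A), and r₁₂ = rk([B₁,B₂,A]) − rk(A). Then for any non-negative integers n₁ ≤ r₁, n₂ ≤ r₂ with n₁ + n₂ ≤ r₁₂, there exist a submatrix B₁' consisting of n₁ columns of B₁ and a submatrix B₂' consisting of n₂ columns of B₂ such that the concatenated matrix [A, B₁', B₂'] has full column rank a + n₁ + n₂. -/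
/-!
Modulo the column span `W` of `A`, the hypotheses bound the dimensions spanned by the images of
the columns of `B₁`, of `B₂` and of both, and full column rank of `[A, B₁', B₂']` means that
the images of the selected columns are linearly independent in the quotient by `W`.

To select them, take a basis `J` of the span of the `B₂`-columns and extend it by `B₁`-columns
`L` to a basis of the span of all columns. If `n₁ ≤ |L|`, any `n₁` columns of `L` and `n₂`
columns of `J` do. Otherwise enlarge `L` to `n₁` independent `B₁`-columns `I₁`; then `I₁ ∪ J`
spans all columns, so `I₁` extends by at least `n₂` columns of `J` to an independent set.
-/

open Submodule Set Module

section

variable {K V ι : Type*} [Field K] [AddCommGroup V] [Module K V] {v : ι → V} {s t : Set ι}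

theorem LinearIndepOn.finrank_span_image (hs : LinearIndepOn K v s) :
    finrank K (span K (v '' s)) = s.ncard := by
  rw [finrank, Set.ncard, ← toENat_rank_span_set hs, Cardinal.toNat_toENat]

theorem LinearIndepOn.finite_of_finiteDimensional [FiniteDimensional K V]
    (hs : LinearIndepOn K v s) : s.Finite :=
  have := hs.linearIndependent.finite
  s.toFinite

theorem LinearIndepOn.exists_superset_ncard_eq [FiniteDimensional K V]
    (hs : LinearIndepOn K v s) (hst : s ⊆ t) {n : ℕ} (hsn : s.ncard ≤ n)
    (hnt : n ≤ finrank K (span K (v '' t))) :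
    ∃ u, s ⊆ u ∧ u ⊆ t ∧ u.ncard = n ∧ LinearIndepOn K v u := by
  have hb := hs.linearIndepOn_extend hst
  rw [← hs.span_image_extend_eq_span_image hst, hb.finrank_span_image] at hnt
  obtain ⟨u, hsu, hub, rfl⟩ := Set.exists_subsuperset_card_eq (hs.subset_extend hst) hsn hnt
  exact ⟨u, hsu, hub.trans (hs.extend_subset hst), rfl, hb.mono hub⟩

theorem exists_linearIndepOn_union_basis [FiniteDimensional K V] (v : ι → V)
    (S₁ S₂ : Set ι) :
    ∃ J ⊆ S₂, ∃ L ⊆ S₁, Disjoint L J ∧ J.ncard = finrank K (span K (v '' S₂)) ∧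
      LinearIndepOn K v (J ∪ L) ∧ v '' (S₁ ∪ S₂) ⊆ span K (v '' (J ∪ L)) := by
  have hJ := (linearIndepOn_empty K v).linearIndepOn_extend (empty_subset S₂)
  set J := (linearIndepOn_empty K v).extend (empty_subset S₂)
  have hS₂J : v '' S₂ ⊆ span K (v '' J) := LinearIndepOn.image_subset_span_image_extend _ _
  have hJS₁ : J ⊆ J ∪ S₁ := subset_union_left
  have hJL : J ∪ (hJ.extend hJS₁ \ J) = hJ.extend hJS₁ :=
    union_sdiff_cancel (hJ.subset_extend _)
  refine ⟨J, LinearIndepOn.extend_subset _ _, hJ.extend hJS₁ \ J,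
    fun i hi ↦ (hJ.extend_subset hJS₁ hi.1).resolve_left hi.2, disjoint_sdiff_left,
    ?_, ?_, ?_⟩
  · rw [← hJ.finrank_span_image, LinearIndepOn.span_image_extend_eq_span_image]
  · rw [hJL]; exact hJ.linearIndepOn_extend hJS₁
  · have hspan := hJ.image_subset_span_image_extend hJS₁
    rw [hJL, image_union]
    refine union_subset ((image_mono subset_union_right).trans hspan) (hS₂J.trans ?_)
    exact span_le.2 ((image_mono subset_union_left).trans hspan)

theorem exists_linearIndepOn_union_of_le_finrank [FiniteDimensional K V] (v : ι → V)
    {S₁ S₂ : Set ι} {n₁ n₂ : ℕ}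
    (h₁ : n₁ ≤ finrank K (span K (v '' S₁))) (h₂ : n₂ ≤ finrank K (span K (v '' S₂)))
    (h₁₂ : n₁ + n₂ ≤ finrank K (span K (v '' (S₁ ∪ S₂)))) :
    ∃ I₁ ⊆ S₁, ∃ I₂ ⊆ S₂, Disjoint I₁ I₂ ∧ I₁.ncard = n₁ ∧ I₂.ncard = n₂ ∧
      LinearIndepOn K v (I₁ ∪ I₂) := by
  obtain ⟨J, hJS₂, L, hLS₁, hLJ, hJcard, hJL, hspan⟩ :=
    exists_linearIndepOn_union_basis (K := K) v S₁ S₂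
  rcases le_total n₁ L.ncard with hn₁L | hLn₁
  · obtain ⟨I₁, hI₁L, rfl⟩ := Set.exists_subset_card_eq hn₁L
    obtain ⟨I₂, hI₂J, rfl⟩ := Set.exists_subset_card_eq (h₂.trans hJcard.ge)
    refine ⟨I₁, hI₁L.trans hLS₁, I₂, hI₂J.trans hJS₂, hLJ.mono hI₁L hI₂J, rfl, rfl,
      hJL.mono ?_⟩
    rw [union_comm]
    exact union_subset_union hI₂J hI₁L
  · obtain ⟨I₁, hLI₁, hI₁S₁, rfl, hI₁⟩ :=
      (hJL.mono subset_union_right).exists_superset_ncard_eq hLS₁ hLn₁ h₁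
    have hspan' : span K (v '' (S₁ ∪ S₂)) ≤ span K (v '' (I₁ ∪ J)) := by
      rw [span_le, union_comm I₁]
      exact hspan.trans (span_mono (image_mono (union_subset_union_right _ hLI₁)))
    obtain ⟨I, hI₁I, hI, hIcard, hIind⟩ := hI₁.exists_superset_ncard_eq
      (subset_union_left (t := J)) (by omega) (h₁₂.trans (finrank_mono hspan'))
    refine ⟨I₁, hI₁S₁, I \ I₁, ?_, disjoint_sdiff_right, rfl, ?_, ?_⟩
    · rw [sdiff_subset_iff]; exact hI.trans (union_subset_union_right _ hJS₂)
    · rw [ncard_sdiff hI₁I hI₁.finite_of_finiteDimensional]; omega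
    · rwa [union_sdiff_cancel hI₁I]

theorem Set.Finite.exists_injective_comp_range_eq {α β : Type*} {f : α → β} {s : Set β}
    (hs : s.Finite) (hsf : s ⊆ range f) :
    ∃ g : Fin s.ncard → α, Function.Injective (f ∘ g) ∧ range (f ∘ g) = s := by
  have := hs.to_subtype
  let e := Finite.equivFinOfCardEq (Nat.card_coe_set_eq s)
  choose g hg using fun i ↦ hsf (e.symm i).2
  have hfg : f ∘ g = Subtype.val ∘ e.symm := funext hg
  refine ⟨g, ?_, ?_⟩ <;> rw [hfg]
  · exact Subtype.val_injective.comp e.symm.injective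
  · rw [EquivLike.range_comp, Subtype.range_coe]

theorem exists_linearIndependent_sumElim_comp [FiniteDimensional K V] {ι₁ ι₂ : Type*}
    (x : ι₁ → V) (y : ι₂ → V) {n₁ n₂ : ℕ}
    (h₁ : n₁ ≤ finrank K (span K (range x))) (h₂ : n₂ ≤ finrank K (span K (range y)))
    (h₁₂ : n₁ + n₂ ≤ finrank K (span K (range (Sum.elim x y)))) :
    ∃ (f₁ : Fin n₁ → ι₁) (f₂ : Fin n₂ → ι₂),
      LinearIndependent K (Sum.elim (x ∘ f₁) (y ∘ f₂)) := by
  rw [← Sum.elim_comp_inl x y, range_comp] at h₁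
  rw [← Sum.elim_comp_inr x y, range_comp] at h₂
  rw [← image_univ, ← range_inl_union_range_inr] at h₁₂
  obtain ⟨I₁, hI₁, I₂, hI₂, -, rfl, rfl, hI⟩ :=
    exists_linearIndepOn_union_of_le_finrank _ h₁ h₂ h₁₂
  obtain ⟨f₁, hf₁, hr₁⟩ :=
    (hI.mono subset_union_left).finite_of_finiteDimensional.exists_injective_comp_range_eq hI₁
  obtain ⟨f₂, hf₂, hr₂⟩ :=
    (hI.mono subset_union_right).finite_of_finiteDimensional.exists_injective_comp_range_eq hI₂
  refine ⟨f₁, f₂, ?_⟩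
  rw [← Sum.elim_comp_map,
    ← linearIndepOn_range_iff (Sum.map_injective.2 ⟨hf₁.of_comp, hf₂.of_comp⟩)]
  refine hI.mono ?_
  rintro _ ⟨i | i, rfl⟩
  · exact Or.inl (hr₁.subset (mem_range_self i))
  · exact Or.inr (hr₂.subset (mem_range_self i))

theorem finrank_span_union_eq_add_finrank_span_image_mkQ [FiniteDimensional K V] (s t : Set V) :
    finrank K (span K (s ∪ t)) =
      finrank K (span K s) + finrank K (span K ((span K s).mkQ '' t)) := by
  let f := (span K s).mkQ.domRestrict (span K (s ∪ t))
  have hrange : LinearMap.range f = span K ((span K s).mkQ '' t) := by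
    rw [LinearMap.range_domRestrict, map_span, image_union, span_union, ← map_span,
      mkQ_map_self, bot_sup_eq]
  have hker : finrank K (LinearMap.ker f) = finrank K (span K s) := by
    rw [LinearMap.ker_domRestrict, ker_mkQ]
    exact (comapSubtypeEquivOfLe (span_mono subset_union_left)).finrank_eq
  rw [← f.finrank_range_add_finrank_ker, hrange, hker, add_comm]

end

namespace Matrix

theorem col_fromCols {R m n₁ n₂ : Type*} (A : Matrix m n₁ R) (C : Matrix m n₂ R) :
    (fromCols A C).col = Sum.elim A.col C.col := by
  ext (j | j) i <;> rfl

variable {m n₁ n₂ : Type*} [Fintype n₁] [Fintype n₂]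

theorem rank_fromCols_comm {R : Type*} [CommSemiring R] (A : Matrix m n₁ R)
    (C : Matrix m n₂ R) :
    (fromCols C A).rank = (fromCols A C).rank := by
  rw [rank_eq_finrank_span_cols, rank_eq_finrank_span_cols, col_fromCols, col_fromCols,
    Sum.elim_range, Sum.elim_range, union_comm]

theorem rank_fromCols {K : Type*} [Field K] [Fintype m] (A : Matrix m n₁ K)
    (C : Matrix m n₂ K) :
    (fromCols A C).rank =
      A.rank + finrank K (span K (range ((span K (range A.col)).mkQ ∘ C.col))) := by
  rw [rank_eq_finrank_span_cols, rank_eq_finrank_span_cols, col_fromCols, Sum.elim_range,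
    finrank_span_union_eq_add_finrank_span_image_mkQ, range_comp]

end Matrix

open Matrix

theorem column_selection_two_general
    {F : Type*} [Field F]
    {d a b₁ b₂ : ℕ}
    (A : Matrix (Fin d) (Fin a) F)
    (B₁ : Matrix (Fin d) (Fin b₁) F) (B₂ : Matrix (Fin d) (Fin b₂) F)
    (hA : A.rank = a)
    (n₁ n₂ : ℕ)
    (hn₁ : n₁ ≤ (Matrix.fromCols B₁ A).rank - A.rank)
    (hn₂ : n₂ ≤ (Matrix.fromCols B₂ A).rank - A.rank)
    (hn₁₂ : n₁ + n₂ ≤ (Matrix.fromCols (Matrix.fromCols B₁ B₂) A).rank - A.rank) :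
    ∃ (f₁ : Fin n₁ → Fin b₁) (f₂ : Fin n₂ → Fin b₂),
      Function.Injective f₁ ∧ Function.Injective f₂ ∧
      (Matrix.fromCols A
        (Matrix.fromCols (B₁.submatrix id f₁) (B₂.submatrix id f₂))).rank
        = a + n₁ + n₂ := by
  rw [rank_fromCols_comm, rank_fromCols] at hn₁ hn₂ hn₁₂
  rw [col_fromCols, Sum.comp_elim] at hn₁₂
  simp only [Nat.add_sub_cancel_left] at hn₁ hn₂ hn₁₂
  obtain ⟨f₁, f₂, hli⟩ := exists_linearIndependent_sumElim_comp _ _ hn₁ hn₂ hn₁₂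
  refine ⟨f₁, f₂,
    Function.Injective.of_comp (f := _ ∘ B₁.col) (hli.injective.comp Sum.inl_injective),
    Function.Injective.of_comp (f := _ ∘ B₂.col) (hli.injective.comp Sum.inr_injective), ?_⟩
  have hcols : (fromCols (B₁.submatrix id f₁) (B₂.submatrix id f₂)).col =
      Sum.elim (B₁.col ∘ f₁) (B₂.col ∘ f₂) := col_fromCols _ _
  rw [rank_fromCols, hA, hcols, Sum.comp_elim, ← Function.comp_assoc, ← Function.comp_assoc,
    finrank_span_eq_card hli, Fintype.card_sum, Fintype.card_fin, Fintype.card_fin, add_assoc]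

/-- Lemma 2 (two-block Steinitz-type column selection).
If `A`, `B₁`, `B₂` have full column rank, `r₁ = rk([B₁,A]) - rk(A)`,
`r₂ = rk([B₂,A]) - rk(A)`, `r₁₂ = rk([B₁,B₂,A]) - rk(A)`, then for any
`n₁ ≤ r₁`, `n₂ ≤ r₂` with `n₁ + n₂ ≤ r₁₂` there exist selections of `n₁`
distinct columns of `B₁` and `n₂` distinct columns of `B₂` such that
`[A, B₁', B₂']` has full column rank `a + n₁ + n₂`. -/
theorem column_selection_two
    {F : Type*} [Field F] [Fintype F] [DecidableEq F]
    {d a b₁ b₂ : ℕ}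
    (A : Matrix (Fin d) (Fin a) F)
    (B₁ : Matrix (Fin d) (Fin b₁) F) (B₂ : Matrix (Fin d) (Fin b₂) F)
    (hA : A.rank = a) (hB₁ : B₁.rank = b₁) (hB₂ : B₂.rank = b₂)
    (n₁ n₂ : ℕ)
    (hn₁ : n₁ ≤ (Matrix.fromCols B₁ A).rank - A.rank)
    (hn₂ : n₂ ≤ (Matrix.fromCols B₂ A).rank - A.rank)
    (hn₁₂ : n₁ + n₂ ≤ (Matrix.fromCols (Matrix.fromCols B₁ B₂) A).rank - A.rank) :
    ∃ (f₁ : Fin n₁ → Fin b₁) (f₂ : Fin n₂ → Fin b₂),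
      Function.Injective f₁ ∧ Function.Injective f₂ ∧
      (Matrix.fromCols A
        (Matrix.fromCols (B₁.submatrix id f₁) (B₂.submatrix id f₂))).rank
        = a + n₁ + n₂ :=
  column_selection_two_general A B₁ B₂ hA n₁ n₂ hn₁ hn₂ hn₁₂
end

section
/- If X₀ = F(X₁) = G(X₂) for deterministic functions F, G and X₁₂ = R(X₁, X₂) for a deterministic function R, then H(X₁₂) + H(X₀) ≤ H(X₁) + H(X₂), where H denotes Shannon entropy of random variables taking finitely many values. -/
open scoped BigOperators

/-- Probability that the random variable `X` takes the value `a`, for a probability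
mass function `p` on a finite sample space `Ω`. -/
noncomputable def pOf {Ω α : Type*} [Fintype Ω] [DecidableEq α]
    (p : Ω → ℝ) (X : Ω → α) (a : α) : ℝ :=
  ∑ ω ∈ Finset.univ.filter (fun ω => X ω = a), p ω

/-- Shannon entropy (natural units) of a random variable `X` with finitely many values,
defined on a finite probability space with mass function `p`. -/
noncomputable def Hent {Ω α : Type*} [Fintype Ω] [Fintype α] [DecidableEq α]
    (p : Ω → ℝ) (X : Ω → α) : ℝ :=
  ∑ a : α, Real.negMulLog (pOf p X a)

/-!
The joint law `P` of `(X₁, X₂)` lives on pairs with `F x₁ = G x₂`, and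
`H(X₁) + H(X₂) - H(X₀)` is the cross-entropy of `P` relative to the conditionally independent
coupling `Q(x₁, x₂) = P(x₁) P(x₂) / P(X₀ = F x₁)` of `X₁` and `X₂` over `X₀`. Since `Q` has no
more mass than `P`, Gibbs' inequality bounds `H(X₁, X₂)` by that cross-entropy. Finally `X₁₂` is
a function of `(X₁, X₂)`, and entropy does not increase under functions.
-/

open Real Finset

section

variable {Ω : Type*} [Fintype Ω] (p : Ω → ℝ)

lemma pOf_nonneg {α : Type*} [DecidableEq α] (hp0 : ∀ ω, 0 ≤ p ω) (X : Ω → α) (a : α) :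
    0 ≤ pOf p X a :=
  sum_nonneg fun ω _ => hp0 ω

lemma exists_eq_of_pOf_ne_zero {α : Type*} [DecidableEq α] {X : Ω → α} {a : α}
    (h : pOf p X a ≠ 0) : ∃ ω, X ω = a :=
  let ⟨ω, hω, _⟩ := exists_ne_zero_of_sum_ne_zero h
  ⟨ω, (mem_filter.1 hω).2⟩

lemma sum_pOf_mul {α : Type*} [Fintype α] [DecidableEq α] (X : Ω → α) (g : α → ℝ) :
    ∑ a, pOf p X a * g a = ∑ ω, p ω * g (X ω) := by
  simp_rw [pOf, sum_mul]
  rw [← sum_fiberwise univ X fun ω => p ω * g (X ω)]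
  refine sum_congr rfl fun a _ => sum_congr rfl fun ω hω => ?_
  rw [(mem_filter.1 hω).2]

lemma sum_pOf {α : Type*} [Fintype α] [DecidableEq α] (X : Ω → α) :
    ∑ a, pOf p X a = ∑ ω, p ω := by
  simpa using sum_pOf_mul p X 1

lemma pOf_comp {α β : Type*} [Fintype α] [DecidableEq α] [DecidableEq β]
    (X : Ω → α) (f : α → β) (b : β) :
    pOf p (fun ω => f (X ω)) b = ∑ a ∈ univ.filter (fun a => f a = b), pOf p X a := by
  calc pOf p (fun ω => f (X ω)) b = ∑ ω, p ω * if f (X ω) = b then 1 else 0 := by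
        simp [pOf, sum_filter]
    _ = ∑ a, pOf p X a * if f a = b then 1 else 0 :=
        (sum_pOf_mul p X fun a => if f a = b then 1 else 0).symm
    _ = _ := by simp [sum_filter]

lemma pOf_le_pOf_comp {α β : Type*} [Fintype α] [DecidableEq α] [DecidableEq β]
    (hp0 : ∀ ω, 0 ≤ p ω) (X : Ω → α) (f : α → β) (a : α) :
    pOf p X a ≤ pOf p (fun ω => f (X ω)) (f a) := by
  rw [pOf_comp p X f]
  exact single_le_sum (fun a _ => pOf_nonneg p hp0 X a) (by simp)

lemma Hent_eq_neg_sum_mul_log {α : Type*} [Fintype α] [DecidableEq α] (X : Ω → α) :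
    Hent p X = -∑ ω, p ω * log (pOf p X (X ω)) := by
  simp [Hent, ← sum_pOf_mul p X fun a => log (pOf p X a), negMulLog]

lemma Hent_comp_eq {α β : Type*} [Fintype α] [DecidableEq α] [Fintype β] [DecidableEq β]
    (X : Ω → α) (f : α → β) :
    Hent p (fun ω => f (X ω)) = -∑ a, pOf p X a * log (pOf p (fun ω => f (X ω)) (f a)) := by
  rw [Hent_eq_neg_sum_mul_log, sum_pOf_mul p X fun a => log (pOf p (fun ω => f (X ω)) (f a))]

lemma Hent_comp_le {α β : Type*} [Fintype α] [DecidableEq α] [Fintype β] [DecidableEq β]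
    (hp0 : ∀ ω, 0 ≤ p ω) (X : Ω → α) (f : α → β) :
    Hent p (fun ω => f (X ω)) ≤ Hent p X := by
  rw [Hent_comp_eq, Hent, neg_le, ← sum_neg_distrib]
  refine sum_le_sum fun a _ => ?_
  rw [negMulLog, neg_mul, neg_neg]
  rcases (pOf_nonneg p hp0 X a).eq_or_lt with h | h
  · simp [← h]
  · exact mul_le_mul_of_nonneg_left (log_le_log h (pOf_le_pOf_comp p hp0 X f a)) h.le

end

lemma negMulLog_add_mul_log_le {x y : ℝ} (hx : 0 ≤ x) (hy : 0 ≤ y) (hxy : 0 < x → 0 < y) :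
    negMulLog x + x * log y ≤ y - x := by
  rcases hx.eq_or_lt with rfl | hx
  · simpa using hy
  have hy := hxy hx
  have key := mul_le_mul_of_nonneg_left (log_le_sub_one_of_pos (div_pos hy hx)) hx.le
  rw [log_div hy.ne' hx.ne', mul_sub_one, mul_div_cancel₀ _ hx.ne'] at key
  rw [negMulLog]
  linarith

lemma sum_negMulLog_le_neg_sum_mul_log {ι : Type*} (s : Finset ι) {P Q : ι → ℝ}
    (hP : ∀ i ∈ s, 0 ≤ P i) (hQ : ∀ i ∈ s, 0 ≤ Q i) (hPQ : ∀ i ∈ s, 0 < P i → 0 < Q i)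
    (hsum : ∑ i ∈ s, Q i ≤ ∑ i ∈ s, P i) :
    ∑ i ∈ s, negMulLog (P i) ≤ -∑ i ∈ s, P i * log (Q i) := by
  have key := sum_le_sum fun i hi => negMulLog_add_mul_log_le (hP i hi) (hQ i hi) (hPQ i hi)
  rw [sum_add_distrib, sum_sub_distrib] at key
  linarith

section

variable {Ω α₀ α₁ α₂ : Type*} [Fintype Ω] [DecidableEq α₀] [DecidableEq α₁] [DecidableEq α₂]
  (p : Ω → ℝ) (X₀ : Ω → α₀) (X₁ : Ω → α₁) (X₂ : Ω → α₂) (F : α₁ → α₀) (G : α₂ → α₀)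

noncomputable def condIndepCoupling (x : α₁ × α₂) : ℝ :=
  if G x.2 = F x.1 then pOf p X₁ x.1 * pOf p X₂ x.2 / pOf p X₀ (F x.1) else 0

lemma condIndepCoupling_nonneg (hp0 : ∀ ω, 0 ≤ p ω) (x : α₁ × α₂) :
    0 ≤ condIndepCoupling p X₀ X₁ X₂ F G x := by
  unfold condIndepCoupling
  split_ifs
  · exact div_nonneg (mul_nonneg (pOf_nonneg p hp0 X₁ _) (pOf_nonneg p hp0 X₂ _))
      (pOf_nonneg p hp0 X₀ _)
  · exact le_rfl

lemma sum_condIndepCoupling_le [Fintype α₁] [Fintype α₂] (hp0 : ∀ ω, 0 ≤ p ω)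
    (hG : ∀ ω, X₀ ω = G (X₂ ω)) :
    ∑ x, condIndepCoupling p X₀ X₁ X₂ F G x ≤ ∑ ω, p ω := by
  obtain rfl : X₀ = fun ω => G (X₂ ω) := funext hG
  have hrow (a : α₁) : ∑ b, condIndepCoupling p (fun ω => G (X₂ ω)) X₁ X₂ F G (a, b)
      = pOf p X₁ a / pOf p (fun ω => G (X₂ ω)) (F a) * pOf p (fun ω => G (X₂ ω)) (F a) := by
    nth_rw 2 [pOf_comp p X₂ G]
    rw [mul_sum, sum_filter]
    refine sum_congr rfl fun b _ => ?_
    unfold condIndepCoupling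
    split_ifs <;> ring
  rw [Fintype.sum_prod_type, ← sum_pOf p X₁]
  refine sum_le_sum fun a _ => (hrow a).trans_le ?_
  rcases eq_or_ne (pOf p (fun ω => G (X₂ ω)) (F a)) 0 with h | h
  · simpa [h] using pOf_nonneg p hp0 X₁ a
  · rw [div_mul_cancel₀ _ h]

theorem Hent_pair_add_Hent_le [Fintype α₀] [Fintype α₁] [Fintype α₂] (hp0 : ∀ ω, 0 ≤ p ω)
    (hF : ∀ ω, X₀ ω = F (X₁ ω)) (hG : ∀ ω, X₀ ω = G (X₂ ω)) :
    Hent p (fun ω => (X₁ ω, X₂ ω)) + Hent p X₀ ≤ Hent p X₁ + Hent p X₂ := by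
  set Y := fun ω => (X₁ ω, X₂ ω)
  set Q := condIndepCoupling p X₀ X₁ X₂ F G
  have hsupp (x : α₁ × α₂) (hx : 0 < pOf p Y x) : 0 < Q x ∧
      log (Q x) = log (pOf p X₁ x.1) + log (pOf p X₂ x.2) - log (pOf p X₀ (F x.1)) := by
    obtain ⟨ω, rfl⟩ := exists_eq_of_pOf_ne_zero p hx.ne'
    have h₁ : 0 < pOf p X₁ (X₁ ω) := hx.trans_le (pOf_le_pOf_comp p hp0 Y Prod.fst _)
    have h₂ : 0 < pOf p X₂ (X₂ ω) := hx.trans_le (pOf_le_pOf_comp p hp0 Y Prod.snd _)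
    have h₀ : 0 < pOf p X₀ (F (X₁ ω)) := by
      rw [show X₀ = fun ω => F (X₁ ω) from funext hF]
      exact h₁.trans_le (pOf_le_pOf_comp p hp0 X₁ F _)
    have hQ : Q (Y ω) = pOf p X₁ (X₁ ω) * pOf p X₂ (X₂ ω) / pOf p X₀ (F (X₁ ω)) :=
      if_pos ((hG ω).symm.trans (hF ω))
    rw [hQ, log_div (by positivity) h₀.ne', log_mul h₁.ne' h₂.ne']
    exact ⟨by positivity, rfl⟩
  have hlog (x : α₁ × α₂) : pOf p Y x * log (Q x)
      = pOf p Y x * (log (pOf p X₁ x.1) + log (pOf p X₂ x.2) - log (pOf p X₀ (F x.1))) := by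
    rcases (pOf_nonneg p hp0 Y x).eq_or_lt with h | h
    · simp [← h]
    · rw [(hsupp x h).2]
  have hgibbs : Hent p Y ≤ -∑ x, pOf p Y x * log (Q x) :=
    sum_negMulLog_le_neg_sum_mul_log univ (fun x _ => pOf_nonneg p hp0 Y x)
      (fun x _ => condIndepCoupling_nonneg p X₀ X₁ X₂ F G hp0 x) (fun x _ hx => (hsupp x hx).1)
      (by rw [sum_pOf]; exact sum_condIndepCoupling_le p X₀ X₁ X₂ F G hp0 hG)
  have h₁ : Hent p X₁ = -∑ x, pOf p Y x * log (pOf p X₁ x.1) := Hent_comp_eq p Y Prod.fst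
  have h₂ : Hent p X₂ = -∑ x, pOf p Y x * log (pOf p X₂ x.2) := Hent_comp_eq p Y Prod.snd
  have h₀ : Hent p X₀ = -∑ x, pOf p Y x * log (pOf p X₀ (F x.1)) := by
    obtain rfl : X₀ = fun ω => F (X₁ ω) := funext hF
    exact Hent_comp_eq p Y fun x => F x.1
  simp only [hlog, mul_add, mul_sub, sum_add_distrib, sum_sub_distrib] at hgibbs
  linarith

end

theorem functional_submodularity_general
    {Ω α₁ α₂ α₀ α₁₂ : Type*} [Fintype Ω]
    [Fintype α₁] [DecidableEq α₁] [Fintype α₂] [DecidableEq α₂]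
    [Fintype α₀] [DecidableEq α₀] [Fintype α₁₂] [DecidableEq α₁₂]
    (p : Ω → ℝ) (hp0 : ∀ ω, 0 ≤ p ω)
    (X₁ : Ω → α₁) (X₂ : Ω → α₂) (X₀ : Ω → α₀) (X₁₂ : Ω → α₁₂)
    (F : α₁ → α₀) (G : α₂ → α₀) (R : α₁ × α₂ → α₁₂)
    (hF : ∀ ω, X₀ ω = F (X₁ ω)) (hG : ∀ ω, X₀ ω = G (X₂ ω))
    (hR : ∀ ω, X₁₂ ω = R (X₁ ω, X₂ ω)) :
    Hent p X₁₂ + Hent p X₀ ≤ Hent p X₁ + Hent p X₂ := by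
  obtain rfl : X₁₂ = fun ω => R (X₁ ω, X₂ ω) := funext hR
  calc Hent p (fun ω => R (X₁ ω, X₂ ω)) + Hent p X₀
      ≤ Hent p (fun ω => (X₁ ω, X₂ ω)) + Hent p X₀ := by
        gcongr
        exact Hent_comp_le p hp0 (fun ω => (X₁ ω, X₂ ω)) R
    _ ≤ Hent p X₁ + Hent p X₂ := Hent_pair_add_Hent_le p X₀ X₁ X₂ F G hp0 hF hG

/-- Functional submodularity of Shannon entropy.
If `X₀ = F(X₁) = G(X₂)` and `X₁₂ = R(X₁, X₂)` then
`H(X₁₂) + H(X₀) ≤ H(X₁) + H(X₂)`. -/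
theorem functional_submodularity
    {Ω α₁ α₂ α₀ α₁₂ : Type*} [Fintype Ω]
    [Fintype α₁] [DecidableEq α₁] [Fintype α₂] [DecidableEq α₂]
    [Fintype α₀] [DecidableEq α₀] [Fintype α₁₂] [DecidableEq α₁₂]
    (p : Ω → ℝ) (hp0 : ∀ ω, 0 ≤ p ω) (hp1 : ∑ ω, p ω = 1)
    (X₁ : Ω → α₁) (X₂ : Ω → α₂) (X₀ : Ω → α₀) (X₁₂ : Ω → α₁₂)
    (F : α₁ → α₀) (G : α₂ → α₀) (R : α₁ × α₂ → α₁₂)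
    (hF : ∀ ω, X₀ ω = F (X₁ ω)) (hG : ∀ ω, X₀ ω = G (X₂ ω))
    (hR : ∀ ω, X₁₂ ω = R (X₁ ω, X₂ ω)) :
    Hent p X₁₂ + Hent p X₀ ≤ Hent p X₁ + Hent p X₂ :=
  functional_submodularity_general p hp0 X₁ X₂ X₀ X₁₂ F G R hF hG hR
end

section
/- If the entries of X ∈ F_q^{d×L} are i.i.d. uniform on F_q, then for fixed matrices M₁ ∈ F_q^{d×μ₁} and M₂ ∈ F_q^{d×μ₂}, the conditional entropy H(XᵀM₁ | XᵀM₂) in q-ary units equals L·(rk([M₁, M₂]) − rk(M₂)). -/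
open scoped BigOperators
open Matrix

/-!
For uniform `X`, the image of `X` under an additive map `f` is uniform on the range of `f`, since
every fibre is a coset of the kernel; hence `H(f X) = log |range f|`. Each of the `L` rows of
`Xᵀ M` ranges independently over the row space of `M`, so `|range (X ↦ Xᵀ M)| = q ^ (L · rk M)`.
Finally `(Xᵀ M₁, Xᵀ M₂)` is an injective relabelling of `Xᵀ [M₁, M₂]`, which does not change
the entropy.
-/

section Entropy

variable {Ω α β : Type*} [Fintype Ω] [DecidableEq α]

lemma pOf_eq_zero_of_notMem_range (p : Ω → ℝ) (X : Ω → α) {a : α} (ha : a ∉ Set.range X) :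
    pOf p X a = 0 := by
  rw [pOf, Finset.filter_false_of_mem fun ω _ h => ha ⟨ω, h⟩, Finset.sum_empty]

lemma pOf_comp_of_injective [DecidableEq β] (p : Ω → ℝ) (X : Ω → α) {g : α → β}
    (hg : Function.Injective g) (a : α) : pOf p (g ∘ X) (g a) = pOf p X a := by
  simp only [pOf, Function.comp_apply, hg.eq_iff]

variable [Fintype α]

lemma Hent_eq_sum_image (p : Ω → ℝ) (X : Ω → α) :
    Hent p X = ∑ a ∈ Finset.univ.image X, Real.negMulLog (pOf p X a) := by
  refine (Finset.sum_subset (Finset.subset_univ _) fun a _ ha => ?_).symm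
  rw [pOf_eq_zero_of_notMem_range p X (by simpa using ha), Real.negMulLog_zero]

lemma Hent_comp_of_injective [Fintype β] [DecidableEq β] (p : Ω → ℝ) (X : Ω → α) {g : α → β}
    (hg : Function.Injective g) : Hent p (g ∘ X) = Hent p X := by
  rw [Hent_eq_sum_image, Hent_eq_sum_image, ← Finset.image_image, Finset.sum_image hg.injOn]
  simp only [pOf_comp_of_injective p X hg]

end Entropy

section Uniform

variable {G A : Type*} [AddGroup G] [Fintype G] [AddGroup A] [DecidableEq A]

lemma pOf_uniform_addMonoidHom (f : G →+ A) (x : G) :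
    pOf (fun _ => (Fintype.card G : ℝ)⁻¹) f (f x) = (Nat.card (Set.range f) : ℝ)⁻¹ := by
  have hfiber : (Finset.univ.filter fun y => f y = f x).card = Nat.card f.ker := by
    rw [← Fintype.card_subtype, ← Nat.card_eq_fintype_card]
    exact Nat.card_congr (f.fiberEquivKer x)
  have hcard : Fintype.card G = Nat.card f.ker * Nat.card (Set.range f) := by
    rw [← Nat.card_eq_fintype_card, ← f.ker.card_mul_index, AddSubgroup.index_ker]
    rfl
  have hker : (Nat.card f.ker : ℝ) ≠ 0 := by exact_mod_cast Nat.card_pos.ne'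
  rw [pOf, Finset.sum_const, nsmul_eq_mul, hfiber, hcard, Nat.cast_mul, mul_inv, ← mul_assoc,
    mul_inv_cancel₀ hker, one_mul]

lemma Hent_uniform_addMonoidHom [Fintype A] (f : G →+ A) :
    Hent (fun _ => (Fintype.card G : ℝ)⁻¹) f = Real.log (Nat.card (Set.range f)) := by
  have hr : (Nat.card (Set.range f) : ℝ) ≠ 0 := Nat.cast_ne_zero.mpr Nat.card_pos.ne'
  have hterm : ∀ a ∈ Finset.univ.image f,
      Real.negMulLog (pOf (fun _ => (Fintype.card G : ℝ)⁻¹) f a)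
        = Real.negMulLog (Nat.card (Set.range f) : ℝ)⁻¹ := by
    intro a ha
    obtain ⟨x, -, rfl⟩ := Finset.mem_image.mp ha
    rw [pOf_uniform_addMonoidHom]
  rw [Hent_eq_sum_image, Finset.sum_congr rfl hterm, Finset.sum_const, nsmul_eq_mul,
    ← Set.toFinset_range, ← Nat.card_eq_card_toFinset, Real.negMulLog, Real.log_inv]
  field_simp

end Uniform

section Matrix

variable {F m l n : Type*} [Field F] [Fintype m]

lemma range_transpose_mul (M : Matrix m n F) :
    Set.range (fun X : Matrix m l F => Xᵀ * M) = {Y | ∀ i, Y i ∈ Set.range (· ᵥ* M)} := by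
  ext Y
  constructor
  · rintro ⟨X, rfl⟩ i
    exact ⟨Xᵀ i, (mul_apply_eq_vecMul _ _ _).symm⟩
  · intro hY
    choose v hv using hY
    exact ⟨(of v)ᵀ, funext fun i => (mul_apply_eq_vecMul _ _ i).trans (hv i)⟩

variable [Fintype F] [Fintype n]

lemma card_range_vecMul (M : Matrix m n F) :
    Nat.card (Set.range (· ᵥ* M)) = Fintype.card F ^ M.rank := by
  rw [← rank_transpose, rank, mulVecLin_transpose, ← M.coe_vecMulLinear, ← LinearMap.coe_range,
    SetLike.coe_sort_coe, Module.natCard_eq_pow_finrank (K := F), Nat.card_eq_fintype_card]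

lemma card_range_transpose_mul [Fintype l] (M : Matrix m n F) :
    Nat.card (Set.range fun X : Matrix m l F => Xᵀ * M)
      = Fintype.card F ^ (Fintype.card l * M.rank) := by
  rw [range_transpose_mul]
  refine (Nat.card_congr (Equiv.subtypePiEquivPi (β := fun _ : l => n → F)
    (p := fun _ v => v ∈ Set.range (· ᵥ* M)))).trans ?_
  rw [Nat.card_pi, Finset.prod_const, Finset.card_univ, card_range_vecMul, ← pow_mul, mul_comm]

lemma Hent_uniform_transpose_mul [DecidableEq m] [Fintype l] [DecidableEq l] [DecidableEq n]
    [DecidableEq F] (M : Matrix m n F) :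
    Hent (fun _ : Matrix m l F => (Fintype.card (Matrix m l F) : ℝ)⁻¹) (fun X => Xᵀ * M)
      = Fintype.card l * M.rank * Real.log (Fintype.card F) := by
  calc _ = Real.log (Nat.card (Set.range fun X : Matrix m l F => Xᵀ * M)) :=
        Hent_uniform_addMonoidHom <|
          AddMonoidHom.mk' (fun X => Xᵀ * M) fun X Y => by rw [transpose_add, Matrix.add_mul]
    _ = _ := by rw [card_range_transpose_mul, Nat.cast_pow, Real.log_pow, Nat.cast_mul]

end Matrix

/-- For `X` uniform on `F_q^{d×L}` and fixed `M₁`, `M₂`, the conditional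
entropy `H(XᵀM₁ | XᵀM₂) = H(XᵀM₁, XᵀM₂) − H(XᵀM₂)` in q-ary units equals
`L·(rk([M₁,M₂]) − rk(M₂))`. -/
theorem conditional_entropy_of_uniform_linear_image
    {F : Type*} [Field F] [Fintype F] [DecidableEq F]
    (d L μ₁ μ₂ : ℕ)
    (M₁ : Matrix (Fin d) (Fin μ₁) F) (M₂ : Matrix (Fin d) (Fin μ₂) F) :
    (Hent (fun _ : Matrix (Fin d) (Fin L) F =>
          ((Fintype.card (Matrix (Fin d) (Fin L) F) : ℝ))⁻¹)
        (fun X => (Xᵀ * M₁, Xᵀ * M₂))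
      - Hent (fun _ : Matrix (Fin d) (Fin L) F =>
          ((Fintype.card (Matrix (Fin d) (Fin L) F) : ℝ))⁻¹)
        (fun X => Xᵀ * M₂)) / Real.log (Fintype.card F)
    = (L : ℝ) * (((Matrix.fromCols M₁ M₂).rank : ℝ) - (M₂.rank : ℝ)) := by
  have hsplit : (fun X : Matrix (Fin d) (Fin L) F => (Xᵀ * M₁, Xᵀ * M₂))
      = (fun Y => (Y.toCols₁, Y.toCols₂)) ∘ fun X => Xᵀ * fromCols M₁ M₂ := by
    funext X
    simp [mul_fromCols]
  have hsplit_injective : Function.Injective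
      fun Y : Matrix (Fin L) (Fin μ₁ ⊕ Fin μ₂) F => (Y.toCols₁, Y.toCols₂) :=
    Function.LeftInverse.injective (g := fun Y => fromCols Y.1 Y.2) fun Y => fromCols_toCols Y
  have hlog : Real.log (Fintype.card F) ≠ 0 :=
    (Real.log_pos (by exact_mod_cast Fintype.one_lt_card)).ne'
  rw [hsplit, Hent_comp_of_injective _ _ hsplit_injective, Hent_uniform_transpose_mul,
    Hent_uniform_transpose_mul, Fintype.card_fin]
  field_simp
end

section
/- Let U₁, U₂, U₃ be finite-dimensional subspaces of a vector space V over a field. Define b₁ = dim(U₁ ∩ (U₂ + U₃)) − dim((U₁∩U₂) + (U₁∩U₃)), b₂ = dim(U₂ ∩ (U₁ + U₃)) − dim((U₁∩U₂) + (U₂∩U₃)), b₃ = dim(U₃ ∩ (U₁ + U₂)) − dim((U₁∩U₃) + (U₂∩U₃)). Then b₁ = b₂ = b₃. -/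
/-- For finite-dimensional subspaces `U₁, U₂, U₃` of a vector space,
the three 'excess' dimensions
`bᵢ = dim(Uᵢ ∩ (Uⱼ + U_k)) − dim((Uᵢ∩Uⱼ) + (Uᵢ∩U_k))` are all equal. -/
theorem three_subspace_excess_dims_eq
    {K V : Type*} [Field K] [AddCommGroup V] [Module K V]
    (U₁ U₂ U₃ : Submodule K V)
    [FiniteDimensional K U₁] [FiniteDimensional K U₂] [FiniteDimensional K U₃] :
    (Module.finrank K ↥(U₁ ⊓ (U₂ ⊔ U₃))
        - Module.finrank K ↥((U₁ ⊓ U₂) ⊔ (U₁ ⊓ U₃))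
      = Module.finrank K ↥(U₂ ⊓ (U₁ ⊔ U₃))
        - Module.finrank K ↥((U₁ ⊓ U₂) ⊔ (U₂ ⊓ U₃)))
    ∧ (Module.finrank K ↥(U₂ ⊓ (U₁ ⊔ U₃))
        - Module.finrank K ↥((U₁ ⊓ U₂) ⊔ (U₂ ⊓ U₃))
      = Module.finrank K ↥(U₃ ⊓ (U₁ ⊔ U₂))
        - Module.finrank K ↥((U₁ ⊓ U₃) ⊔ (U₂ ⊓ U₃))) := by
  have e2 : U₂ ⊔ (U₁ ⊔ U₃) = U₁ ⊔ (U₂ ⊔ U₃) := by rw [sup_left_comm]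
  have e3 : U₃ ⊔ (U₁ ⊔ U₂) = U₁ ⊔ (U₂ ⊔ U₃) := by rw [sup_left_comm, sup_comm U₃]
  have i1 : (U₁ ⊓ U₂) ⊓ (U₁ ⊓ U₃) = U₁ ⊓ U₂ ⊓ U₃ := by
    rw [inf_assoc, inf_left_comm U₂, ← inf_assoc, inf_idem, inf_assoc]
  have i2 : (U₁ ⊓ U₂) ⊓ (U₂ ⊓ U₃) = U₁ ⊓ U₂ ⊓ U₃ := by
    rw [inf_assoc, ← inf_assoc U₂, inf_idem, ← inf_assoc]
  have i3 : (U₁ ⊓ U₃) ⊓ (U₂ ⊓ U₃) = U₁ ⊓ U₂ ⊓ U₃ := by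
    rw [inf_assoc, inf_left_comm U₃, inf_idem, ← inf_assoc]
  -- dimension formulas for the big intersections
  have A1 := Submodule.finrank_sup_add_finrank_inf_eq U₁ (U₂ ⊔ U₃)
  have A2 := Submodule.finrank_sup_add_finrank_inf_eq U₂ (U₁ ⊔ U₃)
  have A3 := Submodule.finrank_sup_add_finrank_inf_eq U₃ (U₁ ⊔ U₂)
  rw [e2] at A2
  rw [e3] at A3
  -- dimension formulas for pairwise sups
  have B1 := Submodule.finrank_sup_add_finrank_inf_eq U₂ U₃
  have B2 := Submodule.finrank_sup_add_finrank_inf_eq U₁ U₃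
  have B3 := Submodule.finrank_sup_add_finrank_inf_eq U₁ U₂
  -- dimension formulas for the sums of pairwise intersections
  have C1 := Submodule.finrank_sup_add_finrank_inf_eq (U₁ ⊓ U₂) (U₁ ⊓ U₃)
  have C2 := Submodule.finrank_sup_add_finrank_inf_eq (U₁ ⊓ U₂) (U₂ ⊓ U₃)
  have C3 := Submodule.finrank_sup_add_finrank_inf_eq (U₁ ⊓ U₃) (U₂ ⊓ U₃)
  rw [i1] at C1
  rw [i2] at C2
  rw [i3] at C3
  -- monotonicity: the excess dimensions are genuine
  have L1 : Module.finrank K ↥((U₁ ⊓ U₂) ⊔ (U₁ ⊓ U₃)) ≤ Module.finrank K ↥(U₁ ⊓ (U₂ ⊔ U₃)) :=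
    Submodule.finrank_mono
      (sup_le (inf_le_inf_left _ le_sup_left) (inf_le_inf_left _ le_sup_right))
  have L2 : Module.finrank K ↥((U₁ ⊓ U₂) ⊔ (U₂ ⊓ U₃)) ≤ Module.finrank K ↥(U₂ ⊓ (U₁ ⊔ U₃)) :=
    Submodule.finrank_mono
      (sup_le (le_inf inf_le_right (inf_le_left.trans le_sup_left))
        (le_inf inf_le_left (inf_le_right.trans le_sup_right)))
  have L3 : Module.finrank K ↥((U₁ ⊓ U₃) ⊔ (U₂ ⊓ U₃)) ≤ Module.finrank K ↥(U₃ ⊓ (U₁ ⊔ U₂)) :=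
    Submodule.finrank_mono
      (sup_le (le_inf inf_le_right (inf_le_left.trans le_sup_left))
        (le_inf inf_le_right (inf_le_left.trans le_sup_right)))
  constructor <;> omega
end

section
/- Let U₁, U₂, U₃ be finite-dimensional subspaces of a vector space V over a field. Then there exist finite families of vectors B₁₂₃, B₁₂, B₁₃, B₂₃, B₁*, B₂*, B₃* such that: B₁₂₃ is a basis of U₁∩U₂∩U₃; B₁₂₃ ∪ B₁₂ is a basis of U₁∩U₂; B₁₂₃ ∪ B₁₃ is a basis of U₁∩U₃; B₁₂₃ ∪ B₂₃ is a basis of U₂∩U₃; B₁₂₃ ∪ B₁₂ ∪ B₁₃ ∪ B₁* is a basis of U₁ ∩ (U₂ + U₃); B₁₂₃ ∪ B₁₂ ∪ B₂₃ ∪ B₂* is a basis of U₂ ∩ (U₁ + U₃); B₁₂₃ ∪ B₁₃ ∪ B₂₃ ∪ B₃* is a basis of U₃ ∩ (U₁ + U₂); and B₁*, B₂*, B₃* can be indexed by a common finite index set I so that for every i ∈ I, B₁*(i) + B₂*(i) = B₃*(i). -/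
/-- A finite family `f` is a basis of the submodule `W`: it is linearly independent
and its range spans `W`. -/
def IsBasisOf {K V : Type*} [Field K] [AddCommGroup V] [Module K V]
    {ι : Type*} (f : ι → V) (W : Submodule K V) : Prop :=
  LinearIndependent K f ∧ Submodule.span K (Set.range f) = W

open Submodule Set Module

section ThreeSubspaceHelpers

variable {K V : Type*} [Field K] [AddCommGroup V] [Module K V]

lemma span_elim {ι κ : Type*} (f : ι → V) (g : κ → V) :
    span K (range (Sum.elim f g)) = span K (range f) ⊔ span K (range g) := by
  rw [Sum.elim_range, Submodule.span_union]

lemma exists_extend {ι : Type*} {f : ι → V} {U : Submodule K V} [FiniteDimensional K U]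
    (hf : LinearIndependent K f) (hfU : span K (range f) ≤ U) :
    ∃ (n : ℕ) (g : Fin n → V), LinearIndependent K (Sum.elim f g) ∧
      span K (range (Sum.elim f g)) = U := by
  set S := span K (range f) with hS
  obtain ⟨C, hC⟩ := Submodule.exists_isCompl (S.comap U.subtype)
  let L : C →ₗ[K] V := U.subtype.comp C.subtype
  have hLinj : Function.Injective L := U.injective_subtype.comp C.injective_subtype
  let b := Module.finBasis K C
  refine ⟨_, fun i => L (b i), ?_, ?_⟩
  · have hg : LinearIndependent K (fun i => L (b i)) :=
      b.linearIndependent.map' L (LinearMap.ker_eq_bot.2 hLinj)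
    have hspan : span K (range fun i => L (b i)) = Submodule.map U.subtype C := by
      have : (range fun i => L (b i)) = L '' (range b) := by
        rw [← Set.range_comp]; rfl
      rw [this, Submodule.span_image, b.span_eq, Submodule.map_top, LinearMap.range_comp,
        Submodule.range_subtype]
    refine hf.sum_type hg ?_
    rw [hspan, disjoint_def]
    intro x hxS hxC
    obtain ⟨u, huC, rfl⟩ := hxC
    have hu : u ∈ S.comap U.subtype := hxS
    have : u = 0 := by
      have := (disjoint_def.1 hC.disjoint) u hu huC
      exact this
    simp [this]
  · have hspan : span K (range fun i => L (b i)) = Submodule.map U.subtype C := by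
      have : (range fun i => L (b i)) = L '' (range b) := by
        rw [← Set.range_comp]; rfl
      rw [this, Submodule.span_image, b.span_eq, Submodule.map_top, LinearMap.range_comp,
        Submodule.range_subtype]
    have hSS : span K (range f) = U ⊓ S := (inf_eq_right.2 hfU).symm
    rw [span_elim, hspan, hSS, ← Submodule.map_comap_subtype U S, ← Submodule.map_sup,
      hC.sup_eq_top, Submodule.map_top, Submodule.range_subtype]

lemma coeff_zero {ι : Type*} {n : ℕ} {f : ι → V} {g : Fin n → V}
    (h : LinearIndependent K (Sum.elim f g)) (c : Fin n → K)
    (hc : (∑ i, c i • g i) ∈ span K (range f)) : c = 0 := by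
  obtain ⟨-, hg, hd⟩ := linearIndependent_sum.1 h
  rw [Sum.elim_comp_inl, Sum.elim_comp_inr] at *
  have hmem : (∑ i, c i • g i) ∈ span K (range g) :=
    sum_mem fun i _ => smul_mem _ _ (subset_span (mem_range_self i))
  have h0 : (∑ i, c i • g i) = 0 := hd.le_bot ⟨hc, hmem⟩
  funext i
  exact Fintype.linearIndependent_iff.1 hg c h0 i

lemma indep_of_key {ι : Type*} {n : ℕ} {t : ι → V} {h : Fin n → V} {T : Submodule K V}
    (ht : LinearIndependent K t) (hspan : span K (range t) = T)
    (key : ∀ c : Fin n → K, (∑ i, c i • h i) ∈ T → c = 0) :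
    LinearIndependent K (Sum.elim t h) := by
  refine ht.sum_type ?_ ?_
  · rw [Fintype.linearIndependent_iff]
    intro c hc0
    have : c = 0 := key c (by rw [hc0]; exact zero_mem T)
    exact fun i => congrFun this i
  · rw [disjoint_def]
    intro x hxT hxh
    obtain ⟨c, rfl⟩ := (mem_span_range_iff_exists_fun K).1 hxh
    have : c = 0 := key c (hspan ▸ hxT)
    simp [this]

lemma triple_basis {α β γ : Type*} {p : α → V} {q : β → V} {r : γ → V}
    {A B : Submodule K V}
    (hpq : LinearIndependent K (Sum.elim p q)) (hA : span K (range (Sum.elim p q)) = A)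
    (hpr : LinearIndependent K (Sum.elim p r)) (hB : span K (range (Sum.elim p r)) = B)
    (hAB : A ⊓ B ≤ span K (range p)) :
    LinearIndependent K (Sum.elim (Sum.elim p q) r) ∧
      span K (range (Sum.elim (Sum.elim p q) r)) = A ⊔ B := by
  obtain ⟨-, hr, hd⟩ := linearIndependent_sum.1 hpr
  rw [Sum.elim_comp_inl, Sum.elim_comp_inr] at *
  have hrB : span K (range r) ≤ B := by
    rw [← hB, span_elim]; exact le_sup_right
  have hpA : span K (range p) ≤ A := by
    rw [← hA, span_elim]; exact le_sup_left
  constructor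
  · refine hpq.sum_type hr ?_
    rw [disjoint_def]
    intro x hxA hxr
    have hxp : x ∈ span K (range p) := hAB ⟨hA ▸ hxA, hrB hxr⟩
    exact hd.le_bot ⟨hxp, hxr⟩
  · rw [span_elim, hA]
    apply le_antisymm
    · exact sup_le le_sup_left (le_trans hrB le_sup_right)
    · refine sup_le le_sup_left ?_
      rw [← hB, span_elim]
      exact sup_le (le_trans hpA le_sup_left) le_sup_right

lemma exists_fin_basis (U : Submodule K V) [FiniteDimensional K U] :
    ∃ (n : ℕ) (g : Fin n → V), LinearIndependent K g ∧ span K (range g) = U := by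
  let b := Module.finBasis K U
  refine ⟨_, fun i => (b i : V), ?_, ?_⟩
  · exact b.linearIndependent.map' U.subtype (Submodule.ker_subtype U)
  · have : (range fun i => ((b i : U) : V)) = U.subtype '' (range b) := by
      rw [← Set.range_comp]; rfl
    rw [this, Submodule.span_image, b.span_eq, Submodule.map_top, Submodule.range_subtype]

lemma rank_identity (A B C : Submodule K V) [FiniteDimensional K A]
    [FiniteDimensional K B] [FiniteDimensional K C] :
    Module.finrank K ↥(A ⊓ (B ⊔ C)) + Module.finrank K ↥(B ⊓ C)
      + Module.finrank K ↥(A ⊔ (B ⊔ C))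
    = Module.finrank K A + Module.finrank K B + Module.finrank K C := by
  have h1 := Submodule.finrank_sup_add_finrank_inf_eq A (B ⊔ C)
  have h2 := Submodule.finrank_sup_add_finrank_inf_eq B C
  omega

end ThreeSubspaceHelpers

set_option maxHeartbeats 1000000 in
/-- The three-subspace decomposition (Theorem 2, (P1)–(P10) and (P20)).
There exist families `B₁₂₃, B₁₂, B₁₃, B₂₃, B₁*, B₂*, B₃*` of vectors such that the
indicated disjoint unions are bases of `U₁∩U₂∩U₃`, `U₁∩U₂`, `U₁∩U₃`, `U₂∩U₃`,
`U₁∩(U₂+U₃)`, `U₂∩(U₁+U₃)`, `U₃∩(U₁+U₂)` respectively, and moreover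
`B₁*(i) + B₂*(i) = B₃*(i)` for every common index `i`. -/
theorem three_subspace_decomposition
    {K V : Type*} [Field K] [AddCommGroup V] [Module K V]
    (U₁ U₂ U₃ : Submodule K V)
    [FiniteDimensional K U₁] [FiniteDimensional K U₂] [FiniteDimensional K U₃] :
    ∃ (n₁₂₃ n₁₂ n₁₃ n₂₃ nI : ℕ)
      (B₁₂₃ : Fin n₁₂₃ → V) (B₁₂ : Fin n₁₂ → V) (B₁₃ : Fin n₁₃ → V)
      (B₂₃ : Fin n₂₃ → V) (B₁s B₂s B₃s : Fin nI → V),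
      IsBasisOf B₁₂₃ (U₁ ⊓ U₂ ⊓ U₃) ∧
      IsBasisOf (Sum.elim B₁₂₃ B₁₂) (U₁ ⊓ U₂) ∧
      IsBasisOf (Sum.elim B₁₂₃ B₁₃) (U₁ ⊓ U₃) ∧
      IsBasisOf (Sum.elim B₁₂₃ B₂₃) (U₂ ⊓ U₃) ∧
      IsBasisOf (Sum.elim (Sum.elim (Sum.elim B₁₂₃ B₁₂) B₁₃) B₁s)
        (U₁ ⊓ (U₂ ⊔ U₃)) ∧
      IsBasisOf (Sum.elim (Sum.elim (Sum.elim B₁₂₃ B₁₂) B₂₃) B₂s)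
        (U₂ ⊓ (U₁ ⊔ U₃)) ∧
      IsBasisOf (Sum.elim (Sum.elim (Sum.elim B₁₂₃ B₁₃) B₂₃) B₃s)
        (U₃ ⊓ (U₁ ⊔ U₂)) ∧
      (∀ i : Fin nI, B₁s i + B₂s i = B₃s i) := by
  classical
  -- basis of the triple intersection
  obtain ⟨n₁₂₃, B₀, hB₀i, hB₀s⟩ := exists_fin_basis (U₁ ⊓ U₂ ⊓ U₃)
  -- extend to the pairwise intersections
  obtain ⟨n₁₂, B₁₂, h12i, h12s⟩ := exists_extend hB₀i
    (le_of_eq_of_le hB₀s inf_le_left : span K (range B₀) ≤ U₁ ⊓ U₂)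
  obtain ⟨n₁₃, B₁₃, h13i, h13s⟩ := exists_extend hB₀i
    (le_of_eq_of_le hB₀s (le_inf (le_trans inf_le_left inf_le_left) inf_le_right) :
      span K (range B₀) ≤ U₁ ⊓ U₃)
  obtain ⟨n₂₃, B₂₃, h23i, h23s⟩ := exists_extend hB₀i
    (le_of_eq_of_le hB₀s (le_inf (le_trans inf_le_left inf_le_right) inf_le_right) :
      span K (range B₀) ≤ U₂ ⊓ U₃)
  -- the three "double sum" subspaces
  set T₁ : Submodule K V := (U₁ ⊓ U₂) ⊔ (U₁ ⊓ U₃) with hT₁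
  set T₂ : Submodule K V := (U₁ ⊓ U₂) ⊔ (U₂ ⊓ U₃) with hT₂
  set T₃ : Submodule K V := (U₁ ⊓ U₃) ⊔ (U₂ ⊓ U₃) with hT₃
  -- triple families
  obtain ⟨tr1i, tr1s⟩ := triple_basis h12i h12s h13i h13s
    (by rw [hB₀s]; intro x hx
        exact ⟨⟨(Submodule.mem_inf.1 (Submodule.mem_inf.1 hx).1).1,
          (Submodule.mem_inf.1 (Submodule.mem_inf.1 hx).1).2⟩,
          (Submodule.mem_inf.1 (Submodule.mem_inf.1 hx).2).2⟩)
  obtain ⟨tr2i, tr2s⟩ := triple_basis h12i h12s h23i h23s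
    (by rw [hB₀s]; intro x hx
        exact ⟨⟨(Submodule.mem_inf.1 (Submodule.mem_inf.1 hx).1).1,
          (Submodule.mem_inf.1 (Submodule.mem_inf.1 hx).1).2⟩,
          (Submodule.mem_inf.1 (Submodule.mem_inf.1 hx).2).2⟩)
  obtain ⟨tr3i, tr3s⟩ := triple_basis h13i h13s h23i h23s
    (by rw [hB₀s]; intro x hx
        exact ⟨⟨(Submodule.mem_inf.1 (Submodule.mem_inf.1 hx).1).1,
          (Submodule.mem_inf.1 (Submodule.mem_inf.1 hx).2).1⟩,
          (Submodule.mem_inf.1 (Submodule.mem_inf.1 hx).1).2⟩)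
  rw [← hT₁] at tr1s
  rw [← hT₂] at tr2s
  rw [← hT₃] at tr3s
  -- extend the first triple family to a basis of U₁ ⊓ (U₂ ⊔ U₃)
  have hT₁le : T₁ ≤ U₁ ⊓ (U₂ ⊔ U₃) :=
    sup_le (le_inf inf_le_left (le_trans inf_le_right le_sup_left))
      (le_inf inf_le_left (le_trans inf_le_right le_sup_right))
  obtain ⟨nI, B₁s, full1i, full1s⟩ := exists_extend tr1i
    (show span K (range (Sum.elim (Sum.elim B₀ B₁₂) B₁₃)) ≤ U₁ ⊓ (U₂ ⊔ U₃) from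
      le_of_eq_of_le tr1s hT₁le)
  -- memberships and the decomposition x = y + z
  have hx : ∀ i, B₁s i ∈ U₁ ⊓ (U₂ ⊔ U₃) := fun i =>
    full1s ▸ Submodule.subset_span ⟨Sum.inr i, rfl⟩
  have hx1 : ∀ i, B₁s i ∈ U₁ := fun i => (Submodule.mem_inf.1 (hx i)).1
  choose y hy z hz hxyz using fun i => Submodule.mem_sup.1 (Submodule.mem_inf.1 (hx i)).2
  -- key coefficient lemmas
  have key₁ : ∀ c : Fin nI → K, (∑ i, c i • B₁s i) ∈ T₁ → c = 0 := by
    intro c hc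
    exact coeff_zero full1i c (by rw [tr1s]; exact hc)
  have hsum : ∀ c : Fin nI → K,
      (∑ i, c i • B₁s i) = (∑ i, c i • y i) + (∑ i, c i • z i) := by
    intro c
    rw [← Finset.sum_add_distrib]
    exact Finset.sum_congr rfl fun i _ => by rw [← hxyz i, smul_add]
  have key₂ : ∀ c : Fin nI → K, (∑ i, c i • (-(y i))) ∈ T₂ → c = 0 := by
    intro c hc
    obtain ⟨p, hp, q, hq, hpq⟩ := Submodule.mem_sup.1 hc
    have hyw : (∑ i, c i • y i) = -(p + q) := by
      have h' : (∑ i, c i • (-(y i))) = -∑ i, c i • y i := by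
        simp [smul_neg, Finset.sum_neg_distrib]
      rw [h'] at hpq
      rw [hpq, neg_neg]
    apply key₁
    have hk : (∑ i, c i • B₁s i) + p ∈ U₁ ⊓ U₃ := by
      refine Submodule.mem_inf.2 ⟨add_mem (sum_mem fun i _ => smul_mem _ _ (hx1 i))
        (Submodule.mem_inf.1 hp).1, ?_⟩
      have h'' : (∑ i, c i • B₁s i) + p = (∑ i, c i • z i) - q := by
        rw [hsum c, hyw]; abel
      rw [h'']
      exact sub_mem (sum_mem fun i _ => smul_mem _ _ (hz i)) (Submodule.mem_inf.1 hq).2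
    have h3 : (∑ i, c i • B₁s i) = ((∑ i, c i • B₁s i) + p) + (-p) := by abel
    rw [h3]
    exact add_mem (Submodule.mem_sup_right hk) (Submodule.mem_sup_left (neg_mem hp))
  have key₃ : ∀ c : Fin nI → K, (∑ i, c i • z i) ∈ T₃ → c = 0 := by
    intro c hc
    obtain ⟨p, hp, q, hq, hpq⟩ := Submodule.mem_sup.1 hc
    apply key₁
    have hk : (∑ i, c i • B₁s i) - p ∈ U₁ ⊓ U₂ := by
      refine Submodule.mem_inf.2 ⟨sub_mem (sum_mem fun i _ => smul_mem _ _ (hx1 i))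
        (Submodule.mem_inf.1 hp).1, ?_⟩
      have h'' : (∑ i, c i • B₁s i) - p = (∑ i, c i • y i) + q := by
        rw [hsum c, ← hpq]; abel
      rw [h'']
      exact add_mem (sum_mem fun i _ => smul_mem _ _ (hy i)) (Submodule.mem_inf.1 hq).1
    have h3 : (∑ i, c i • B₁s i) = ((∑ i, c i • B₁s i) - p) + p := by abel
    rw [h3]
    exact add_mem (Submodule.mem_sup_left hk) (Submodule.mem_sup_right hp)
  -- independence of the second and third full families
  have full2i : LinearIndependent K
      (Sum.elim (Sum.elim (Sum.elim B₀ B₁₂) B₂₃) (fun i => -(y i))) :=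
    indep_of_key tr2i tr2s key₂
  have full3i : LinearIndependent K
      (Sum.elim (Sum.elim (Sum.elim B₀ B₁₃) B₂₃) z) :=
    indep_of_key tr3i tr3s key₃
  -- finrank bookkeeping
  have c123 : Module.finrank K ↥(U₁ ⊓ U₂ ⊓ U₃) = n₁₂₃ := by
    rw [← hB₀s, finrank_span_eq_card hB₀i, Fintype.card_fin]
  have c12 : Module.finrank K ↥(U₁ ⊓ U₂) = n₁₂₃ + n₁₂ := by
    rw [← h12s, finrank_span_eq_card h12i]; simp
  have c13 : Module.finrank K ↥(U₁ ⊓ U₃) = n₁₂₃ + n₁₃ := by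
    rw [← h13s, finrank_span_eq_card h13i]; simp
  have c23 : Module.finrank K ↥(U₂ ⊓ U₃) = n₁₂₃ + n₂₃ := by
    rw [← h23s, finrank_span_eq_card h23i]; simp
  have cfull1 : Module.finrank K ↥(U₁ ⊓ (U₂ ⊔ U₃)) = n₁₂₃ + n₁₂ + n₁₃ + nI := by
    rw [← full1s, finrank_span_eq_card full1i]; simp [add_assoc]
  have id1 := rank_identity U₁ U₂ U₃
  have id2 := rank_identity U₂ U₁ U₃
  have id3 := rank_identity U₃ U₁ U₂
  have e2 : (U₂ ⊔ (U₁ ⊔ U₃)) = (U₁ ⊔ (U₂ ⊔ U₃)) := by rw [sup_left_comm]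
  have e3 : (U₃ ⊔ (U₁ ⊔ U₂)) = (U₁ ⊔ (U₂ ⊔ U₃)) := by
    rw [sup_comm U₂ U₃, sup_left_comm]
  rw [e2] at id2
  rw [e3] at id3
  have cfull2 : Module.finrank K ↥(U₂ ⊓ (U₁ ⊔ U₃)) = n₁₂₃ + n₁₂ + n₂₃ + nI := by
    omega
  have cfull3 : Module.finrank K ↥(U₃ ⊓ (U₁ ⊔ U₂)) = n₁₂₃ + n₁₃ + n₂₃ + nI := by
    omega
  -- span facts for the second and third full families
  have hspan12 : span K (range B₁₂) ≤ U₁ ⊓ U₂ := by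
    rw [← h12s, span_elim]; exact le_sup_right
  have hspan13 : span K (range B₁₃) ≤ U₁ ⊓ U₃ := by
    rw [← h13s, span_elim]; exact le_sup_right
  have hspan23 : span K (range B₂₃) ≤ U₂ ⊓ U₃ := by
    rw [← h23s, span_elim]; exact le_sup_right
  have hspan0 : span K (range B₀) ≤ U₁ ⊓ U₂ ⊓ U₃ := le_of_eq hB₀s
  have full2s : span K (range (Sum.elim (Sum.elim (Sum.elim B₀ B₁₂) B₂₃)
      (fun i => -(y i)))) = U₂ ⊓ (U₁ ⊔ U₃) := by
    have hle : span K (range (Sum.elim (Sum.elim (Sum.elim B₀ B₁₂) B₂₃)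
        (fun i => -(y i)))) ≤ U₂ ⊓ (U₁ ⊔ U₃) := by
      rw [span_elim, tr2s]
      refine sup_le (sup_le ?_ ?_) ?_
      · exact le_inf inf_le_right (le_trans inf_le_left le_sup_left)
      · exact le_inf inf_le_left (le_trans inf_le_right le_sup_right)
      · rw [Submodule.span_le]
        rintro x ⟨i, rfl⟩
        have hmem : -(y i) ∈ U₁ ⊔ U₃ := by
          have h4 : -(y i) = z i - B₁s i := by rw [← hxyz i]; abel
          rw [h4]
          exact sub_mem (Submodule.mem_sup_right (hz i)) (Submodule.mem_sup_left (hx1 i))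
        exact Submodule.mem_inf.2 ⟨neg_mem (hy i), hmem⟩
    refine Submodule.eq_of_le_of_finrank_le hle ?_
    rw [cfull2, finrank_span_eq_card full2i]
    simp [add_assoc]
  have full3s : span K (range (Sum.elim (Sum.elim (Sum.elim B₀ B₁₃) B₂₃) z))
      = U₃ ⊓ (U₁ ⊔ U₂) := by
    have hle : span K (range (Sum.elim (Sum.elim (Sum.elim B₀ B₁₃) B₂₃) z))
        ≤ U₃ ⊓ (U₁ ⊔ U₂) := by
      rw [span_elim, tr3s]
      refine sup_le (sup_le ?_ ?_) ?_
      · exact le_inf inf_le_right (le_trans inf_le_left le_sup_left)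
      · exact le_inf inf_le_right (le_trans inf_le_left le_sup_right)
      · rw [Submodule.span_le]
        rintro x ⟨i, rfl⟩
        have hmem : z i ∈ U₁ ⊔ U₂ := by
          have h4 : z i = B₁s i - y i := by rw [← hxyz i]; abel
          rw [h4]
          exact sub_mem (Submodule.mem_sup_left (hx1 i)) (Submodule.mem_sup_right (hy i))
        exact Submodule.mem_inf.2 ⟨hz i, hmem⟩
    refine Submodule.eq_of_le_of_finrank_le hle ?_
    rw [cfull3, finrank_span_eq_card full3i]
    simp [add_assoc]
  -- assemble
  refine ⟨n₁₂₃, n₁₂, n₁₃, n₂₃, nI, B₀, B₁₂, B₁₃, B₂₃, B₁s, (fun i => -(y i)), z,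
    ⟨hB₀i, hB₀s⟩, ⟨h12i, h12s⟩, ⟨h13i, h13s⟩, ⟨h23i, h23s⟩,
    ⟨full1i, full1s⟩, ⟨full2i, full2s⟩, ⟨full3i, full3s⟩, ?_⟩
  intro i
  show B₁s i + -(y i) = z i
  rw [← hxyz i]; abel
end

section
/- Consider real numbers b₁, b₂, b₃ ≥ 0 and capacity bounds w₁ᵐ, w₂ᵐ, w₃ᵐ, w₁₂ᵐ, w₁₃ᵐ, w₂₃ᵐ ≥ 0 satisfying max(w₁ᵐ, w₂ᵐ) ≤ w₁₂ᵐ, max(w₁ᵐ, w₃ᵐ) ≤ w₁₃ᵐ, max(w₂ᵐ, w₃ᵐ) ≤ w₂₃ᵐ. Define h* as the supremum over w₁, w₂, w₃ ≥ 0 with wᵢ ≤ wᵢᵐ and wᵢ + w_j ≤ w_{ij}ᵐ (for all pairs i < j) of min(b₁+w₁, b₂+w₂, b₃+w₃). Then h* = min( b₁+w₁ᵐ, b₂+w₂ᵐ, b₃+w₃ᵐ, (b₁+b₂+w₁₂ᵐ)/2, (b₁+b₃+w₁₃ᵐ)/2, (b₂+b₃+w₂₃ᵐ)/2 ). -/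
/-- Constrained waterfilling. With base heights `b₁,b₂,b₃ ≥ 0`,
individual capacities `wᵢᵐ ≥ 0` and pairwise capacities `w_{ij}ᵐ ≥ 0` dominating
the individual ones, the optimal minimum water level equals
`min(b₁+w₁ᵐ, b₂+w₂ᵐ, b₃+w₃ᵐ, (b₁+b₂+w₁₂ᵐ)/2, (b₁+b₃+w₁₃ᵐ)/2, (b₂+b₃+w₂₃ᵐ)/2)`. -/
theorem constrained_waterfilling
    (b₁ b₂ b₃ w₁m w₂m w₃m w₁₂m w₁₃m w₂₃m : ℝ)
    (hb₁ : 0 ≤ b₁) (hb₂ : 0 ≤ b₂) (hb₃ : 0 ≤ b₃)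
    (hw₁ : 0 ≤ w₁m) (hw₂ : 0 ≤ w₂m) (hw₃ : 0 ≤ w₃m)
    (hw₁₂ : 0 ≤ w₁₂m) (hw₁₃ : 0 ≤ w₁₃m) (hw₂₃ : 0 ≤ w₂₃m)
    (hd₁₂ : max w₁m w₂m ≤ w₁₂m)
    (hd₁₃ : max w₁m w₃m ≤ w₁₃m)
    (hd₂₃ : max w₂m w₃m ≤ w₂₃m) :
    sSup { h : ℝ | ∃ w₁ w₂ w₃ : ℝ,
        0 ≤ w₁ ∧ 0 ≤ w₂ ∧ 0 ≤ w₃ ∧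
        w₁ ≤ w₁m ∧ w₂ ≤ w₂m ∧ w₃ ≤ w₃m ∧
        w₁ + w₂ ≤ w₁₂m ∧ w₁ + w₃ ≤ w₁₃m ∧ w₂ + w₃ ≤ w₂₃m ∧
        h = min (b₁ + w₁) (min (b₂ + w₂) (b₃ + w₃)) }
      = min (b₁ + w₁m) (min (b₂ + w₂m) (min (b₃ + w₃m)
          (min ((b₁ + b₂ + w₁₂m) / 2)
            (min ((b₁ + b₃ + w₁₃m) / 2) ((b₂ + b₃ + w₂₃m) / 2))))) := by
  set S := { h : ℝ | ∃ w₁ w₂ w₃ : ℝ,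
        0 ≤ w₁ ∧ 0 ≤ w₂ ∧ 0 ≤ w₃ ∧
        w₁ ≤ w₁m ∧ w₂ ≤ w₂m ∧ w₃ ≤ w₃m ∧
        w₁ + w₂ ≤ w₁₂m ∧ w₁ + w₃ ≤ w₁₃m ∧ w₂ + w₃ ≤ w₂₃m ∧
        h = min (b₁ + w₁) (min (b₂ + w₂) (b₃ + w₃)) } with hS
  set M := min (b₁ + w₁m) (min (b₂ + w₂m) (min (b₃ + w₃m)
          (min ((b₁ + b₂ + w₁₂m) / 2)
            (min ((b₁ + b₃ + w₁₃m) / 2) ((b₂ + b₃ + w₂₃m) / 2))))) with hM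
  have hM1 : M ≤ b₁ + w₁m := min_le_left _ _
  have hM2 : M ≤ b₂ + w₂m := le_trans (min_le_right _ _) (min_le_left _ _)
  have hM3 : M ≤ b₃ + w₃m :=
    le_trans (min_le_right _ _) (le_trans (min_le_right _ _) (min_le_left _ _))
  have hM12 : M ≤ (b₁ + b₂ + w₁₂m) / 2 :=
    le_trans (min_le_right _ _) (le_trans (min_le_right _ _)
      (le_trans (min_le_right _ _) (min_le_left _ _)))
  have hM13 : M ≤ (b₁ + b₃ + w₁₃m) / 2 :=
    le_trans (min_le_right _ _) (le_trans (min_le_right _ _)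
      (le_trans (min_le_right _ _) (le_trans (min_le_right _ _) (min_le_left _ _))))
  have hM23 : M ≤ (b₂ + b₃ + w₂₃m) / 2 :=
    le_trans (min_le_right _ _) (le_trans (min_le_right _ _)
      (le_trans (min_le_right _ _) (le_trans (min_le_right _ _) (min_le_right _ _))))
  have hd1 : w₁m ≤ w₁₂m := le_trans (le_max_left _ _) hd₁₂
  have hd2 : w₂m ≤ w₁₂m := le_trans (le_max_right _ _) hd₁₂
  have hd3 : w₁m ≤ w₁₃m := le_trans (le_max_left _ _) hd₁₃
  have hd4 : w₃m ≤ w₁₃m := le_trans (le_max_right _ _) hd₁₃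
  have hd5 : w₂m ≤ w₂₃m := le_trans (le_max_left _ _) hd₂₃
  have hd6 : w₃m ≤ w₂₃m := le_trans (le_max_right _ _) hd₂₃
  have aux : ∀ x y w : ℝ, 0 ≤ w → x ≤ w → y ≤ w → x + y ≤ w →
      max 0 x + max 0 y ≤ w := by
    intro x y w h0 hx hy hxy
    rcases max_cases 0 x with ⟨e1, _⟩ | ⟨e1, _⟩ <;>
      rcases max_cases 0 y with ⟨e2, _⟩ | ⟨e2, _⟩ <;> rw [e1, e2] <;> linarith
  -- some base is below M
  have hbase : b₁ ≤ M ∨ b₂ ≤ M ∨ b₃ ≤ M := by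
    by_contra hc
    push_neg at hc
    obtain ⟨hc1, hc2, hc3⟩ := hc
    have : M < M := by
      rw [hM]
      refine lt_min (by linarith) (lt_min (by linarith) (lt_min (by linarith)
        (lt_min (by linarith) (lt_min (by linarith) (by linarith)))))
    exact lt_irrefl _ this
  -- membership of M
  have hmem : M ∈ S := by
    refine ⟨max 0 (M - b₁), max 0 (M - b₂), max 0 (M - b₃),
      le_max_left _ _, le_max_left _ _, le_max_left _ _,
      max_le hw₁ (by linarith), max_le hw₂ (by linarith), max_le hw₃ (by linarith),
      aux _ _ _ hw₁₂ (by linarith) (by linarith) (by linarith),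
      aux _ _ _ hw₁₃ (by linarith) (by linarith) (by linarith),
      aux _ _ _ hw₂₃ (by linarith) (by linarith) (by linarith), ?_⟩
    have h1 : M ≤ b₁ + max 0 (M - b₁) := by
      have := le_max_right 0 (M - b₁); linarith
    have h2 : M ≤ b₂ + max 0 (M - b₂) := by
      have := le_max_right 0 (M - b₂); linarith
    have h3 : M ≤ b₃ + max 0 (M - b₃) := by
      have := le_max_right 0 (M - b₃); linarith
    refine le_antisymm (le_min h1 (le_min h2 h3)) ?_
    rcases hbase with hb | hb | hb
    · have e : b₁ + max 0 (M - b₁) = M := by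
        rw [max_eq_right (by linarith : (0:ℝ) ≤ M - b₁)]; ring
      calc min (b₁ + max 0 (M - b₁)) (min (b₂ + max 0 (M - b₂)) (b₃ + max 0 (M - b₃)))
          ≤ b₁ + max 0 (M - b₁) := min_le_left _ _
        _ = M := e
    · have e : b₂ + max 0 (M - b₂) = M := by
        rw [max_eq_right (by linarith : (0:ℝ) ≤ M - b₂)]; ring
      calc min (b₁ + max 0 (M - b₁)) (min (b₂ + max 0 (M - b₂)) (b₃ + max 0 (M - b₃)))
          ≤ b₂ + max 0 (M - b₂) := le_trans (min_le_right _ _) (min_le_left _ _)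
        _ = M := e
    · have e : b₃ + max 0 (M - b₃) = M := by
        rw [max_eq_right (by linarith : (0:ℝ) ≤ M - b₃)]; ring
      calc min (b₁ + max 0 (M - b₁)) (min (b₂ + max 0 (M - b₂)) (b₃ + max 0 (M - b₃)))
          ≤ b₃ + max 0 (M - b₃) := le_trans (min_le_right _ _) (min_le_right _ _)
        _ = M := e
  -- M is an upper bound
  have hub : ∀ h ∈ S, h ≤ M := by
    rintro h ⟨w₁, w₂, w₃, hp1, hp2, hp3, hu1, hu2, hu3, hp12, hp13, hp23, rfl⟩
    have p1 : min (b₁ + w₁) (min (b₂ + w₂) (b₃ + w₃)) ≤ b₁ + w₁ := min_le_left _ _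
    have p2 : min (b₁ + w₁) (min (b₂ + w₂) (b₃ + w₃)) ≤ b₂ + w₂ :=
      le_trans (min_le_right _ _) (min_le_left _ _)
    have p3 : min (b₁ + w₁) (min (b₂ + w₂) (b₃ + w₃)) ≤ b₃ + w₃ :=
      le_trans (min_le_right _ _) (min_le_right _ _)
    rw [hM]
    refine le_min (by linarith) (le_min (by linarith) (le_min (by linarith)
      (le_min (by linarith) (le_min (by linarith) (by linarith)))))
  exact le_antisymm (csSup_le ⟨M, hmem⟩ hub) (le_csSup ⟨M, hub⟩ hmem)
end

section
/- Let V = F_2^2 with coordinates (A,B). Define three users: User 1 knows A and wants B; User 2 knows B and wants A+B; User 3 knows A+B and wants A. Then, for L = 1 computation, any encoder Φ: F_2^2 → S for which there exist decoders Ψ_k satisfying Ψ₁(Φ(A,B), A) = B, Ψ₂(Φ(A,B), B) = A+B, Ψ₃(Φ(A,B), A+B) = A for all (A,B) ∈ F_2^2 requires |S| ≥ 4. -/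
/-- For the 3-user LCBC over `F₂` with `d = 2`, `L = 1`, where
User 1 knows `A` and wants `B`, User 2 knows `B` and wants `A+B`, User 3 knows
`A+B` and wants `A`, any valid encoder `Φ : F₂² → S` with decoders `Ψ₁,Ψ₂,Ψ₃`
requires `|S| ≥ 4`; in particular no scheme with `|S| ≤ 2` exists. -/
theorem scalar_scheme_needs_four_symbols
    (S : Type*) [Fintype S]
    (Φ : ZMod 2 × ZMod 2 → S)
    (Ψ₁ Ψ₂ Ψ₃ : S → ZMod 2 → ZMod 2)
    (h₁ : ∀ A B : ZMod 2, Ψ₁ (Φ (A, B)) A = B)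
    (h₂ : ∀ A B : ZMod 2, Ψ₂ (Φ (A, B)) B = A + B)
    (h₃ : ∀ A B : ZMod 2, Ψ₃ (Φ (A, B)) (A + B) = A) :
    4 ≤ Fintype.card S := by
  have hinj : Function.Injective Φ := by
    rintro ⟨A, B⟩ ⟨A', B'⟩ h
    by_cases hA : A = A'
    · subst hA
      have hB : B = B' := by
        have := h₁ A B'
        rw [← h, h₁ A B] at this
        exact this
      rw [hB]
    · exfalso
      by_cases hB : B = B'
      · subst hB
        have := h₂ A' B
        rw [← h, h₂ A B] at this
        exact hA (by
          have := add_right_cancel this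
          exact this)
      · have key : ∀ x y : ZMod 2, ¬x = y → y = x + 1 := by decide
        have hA' : A' = A + 1 := key A A' hA
        have hB' : B' = B + 1 := key B B' hB
        have hsum : A' + B' = A + B := by
          rw [hA', hB']
          have h11 : ∀ x y : ZMod 2, x + 1 + (y + 1) = x + y := by decide
          exact h11 A B
        have := h₃ A' B'
        rw [← h, hsum, h₃ A B] at this
        exact hA this
  calc 4 = Fintype.card (ZMod 2 × ZMod 2) := by decide
    _ ≤ Fintype.card S := Fintype.card_le_of_injective Φ hinj
end

section
/- Over F_3 with data (A,B,C) and two computation instances, the broadcast S = (A₁+B₁+C₁, A₂+2B₂+2C₂, (A₁+2B₁+C₁)+(A₂+2B₂+C₂)) ∈ F_3³ allows: User 1, knowing A₁, A₂, to recover B₁+C₁ and B₂+C₂; User 2, knowing B₁, B₂, to recover A₁+C₁ and A₂+C₂; User 3, knowing C₁, C₂, to recover A₁+2B₁ and A₂+2B₂. -/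
/-- Achievability for Example 2 over `F₃` with two computation instances.
With broadcast `S = (A₁+B₁+C₁, A₂+2B₂+2C₂, (A₁+2B₁+C₁)+(A₂+2B₂+C₂))`:
User 1 (knows `A₁,A₂`) recovers `(B₁+C₁, B₂+C₂)`;
User 2 (knows `B₁,B₂`) recovers `(A₁+C₁, A₂+C₂)`;
User 3 (knows `C₁,C₂`) recovers `(A₁+2B₁, A₂+2B₂)`. -/
theorem three_halves_scheme_correct :
    (∃ dec₁ : (ZMod 3 × ZMod 3 × ZMod 3) → (ZMod 3 × ZMod 3) → ZMod 3 × ZMod 3,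
      ∀ A₁ B₁ C₁ A₂ B₂ C₂ : ZMod 3,
        dec₁ (A₁ + B₁ + C₁, A₂ + 2*B₂ + 2*C₂, (A₁ + 2*B₁ + C₁) + (A₂ + 2*B₂ + C₂))
          (A₁, A₂) = (B₁ + C₁, B₂ + C₂)) ∧
    (∃ dec₂ : (ZMod 3 × ZMod 3 × ZMod 3) → (ZMod 3 × ZMod 3) → ZMod 3 × ZMod 3,
      ∀ A₁ B₁ C₁ A₂ B₂ C₂ : ZMod 3,
        dec₂ (A₁ + B₁ + C₁, A₂ + 2*B₂ + 2*C₂, (A₁ + 2*B₁ + C₁) + (A₂ + 2*B₂ + C₂))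
          (B₁, B₂) = (A₁ + C₁, A₂ + C₂)) ∧
    (∃ dec₃ : (ZMod 3 × ZMod 3 × ZMod 3) → (ZMod 3 × ZMod 3) → ZMod 3 × ZMod 3,
      ∀ A₁ B₁ C₁ A₂ B₂ C₂ : ZMod 3,
        dec₃ (A₁ + B₁ + C₁, A₂ + 2*B₂ + 2*C₂, (A₁ + 2*B₁ + C₁) + (A₂ + 2*B₂ + C₂))
          (C₁, C₂) = (A₁ + 2*B₁, A₂ + 2*B₂)) := by
  refine ⟨⟨fun s k => (s.1 - k.1, 2 * (s.2.1 - k.2)), ?_⟩,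
          ⟨fun s k => (s.1 - k.1, s.2.2 - s.1 - k.1 - 2 * k.2), ?_⟩,
          ⟨fun s k => (s.2.2 - s.2.1 - k.1 + k.2, s.2.1 - 2 * k.2), ?_⟩⟩
  · intro A₁ B₁ C₁ A₂ B₂ C₂
    refine Prod.ext (by ring) ?_
    show 2 * (A₂ + 2*B₂ + 2*C₂ - A₂) = B₂ + C₂
    ring_nf; revert B₂ C₂; decide
  · intro A₁ B₁ C₁ A₂ B₂ C₂
    exact Prod.ext (by ring) (by ring)
  · intro A₁ B₁ C₁ A₂ B₂ C₂
    exact Prod.ext (by ring) (by ring)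
end

section
/- For the 3-user LCBC with subspaces U_k = ⟨[V_k', V_k]⟩ ⊆ F_q^d and i.i.d. uniform data X ∈ F_q^{d×L}, any valid broadcast S satisfies 2H(S) ≥ max_{ℓ∈{1,2,3}} rk(U₁₂₃ ∩ V_ℓ')·L + rk((U₁₂+U₁₃) ∩ V₁')·L + rk(U₃∩(U₁+U₂) ∩ V₃')·L + rk(U₂∩(U₁+U₃) ∩ V₂')·L + 2L·rk(U₁+U₂+U₃) − 2L·(rk(V₁')+rk(V₂')+rk(V₃')), where U₁₂₃ = U₁∩U₂∩U₃, U_{ij} = U_i∩U_j, and entropy is in q-ary units. -/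
open scoped BigOperators
open Matrix

/-- Column span of a matrix, as a submodule of `F^d`. -/
noncomputable def colSpan {F : Type*} [Field F] {d : ℕ} {n : Type*} [Fintype n]
    (M : Matrix (Fin d) n F) : Submodule F (Fin d → F) :=
  LinearMap.range M.mulVecLin

/-!
Write `h(T) = H(S, X|_T)` for the entropy of the broadcast together with the projections of the
data onto a subspace `T`. The pairs `(S, X|_T)` and `(S, X|_T')` both determine
`(S, X|_{T ∩ T'})` and jointly determine `(S, X|_{T + T'})`, so functional submodularity makes `h`
submodular on subspaces, while decodability gives `h(U_k) = h(⟨V_k'⟩)`. Five submodularity steps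
bound `h(U₁₂ + U₁₃) + h(U₁₂₃) + h(U₃ ∩ (U₁ + U₂)) + h(U₂ ∩ (U₁ + U₃)) + 2 h(U₁ + U₂ + U₃)` by
`2 (h(U₁) + h(U₂) + h(U₃))`. On the left, `h(U₁ + U₂ + U₃) ≥ rk(U₁ + U₂ + U₃) L`, and a term
`h(T)` paired with user `k` is at least `h(U_k) - (rk V_k' - rk(T ∩ V_k')) L`, since only the
side information outside `T` is missing. On the right, `h(U_k) ≤ H(S) + rk(V_k') L` for the two
users other than `ℓ`.
-/

open Finset Function

section UniformEntropy

variable {Ω α β γ : Type*} [Fintype Ω]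

noncomputable def fiberCard (f : Ω → α) (ω : Ω) : ℕ := Nat.card (f ⁻¹' {f ω})

/-- The entropy of `f ω` for `ω` uniform on `Ω`, written as the mean surprisal
`𝔼 [-log P(f = f ω)]`. -/
noncomputable def uniformEntropy (f : Ω → α) : ℝ :=
  (Fintype.card Ω : ℝ)⁻¹ * ∑ ω, Real.log (Fintype.card Ω / fiberCard f ω)

lemma fiberCard_eq_card_filter [DecidableEq α] (f : Ω → α) (ω : Ω) :
    fiberCard f ω = #{ω' | f ω' = f ω} := by
  rw [fiberCard, ← Set.ncard_coe_finset, ← Nat.card_coe_set_eq]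
  congr
  ext
  simp

lemma fiberCard_pos (f : Ω → α) (ω : Ω) : 0 < fiberCard f ω := by
  classical
  exact fiberCard_eq_card_filter f ω ▸ card_pos.2 ⟨ω, by simp⟩

lemma fiberCard_congr (f : Ω → α) {ω ω' : Ω} (h : f ω = f ω') :
    fiberCard f ω = fiberCard f ω' := by
  classical
  rw [fiberCard_eq_card_filter, fiberCard_eq_card_filter, h]

lemma fiberCard_le_of_factorsThrough {f : Ω → α} {g : Ω → β} (h : f.FactorsThrough g)
    (ω : Ω) : fiberCard g ω ≤ fiberCard f ω :=
  Nat.card_mono (Set.toFinite _) fun _ hω' => h hω'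

lemma sum_inv_fiberCard_fiber [DecidableEq α] (f : Ω → α) (ω₀ : Ω) :
    ∑ ω with f ω = f ω₀, (fiberCard f ω : ℝ)⁻¹ = 1 := by
  rw [sum_congr rfl fun ω hω => by rw [fiberCard_congr f (mem_filter.1 hω).2], sum_const,
    nsmul_eq_mul, ← fiberCard_eq_card_filter]
  exact mul_inv_cancel₀ (by exact_mod_cast (fiberCard_pos f ω₀).ne')

lemma uniformEntropy_le_of_factorsThrough {f : Ω → α} {g : Ω → β} (h : f.FactorsThrough g) :
    uniformEntropy f ≤ uniformEntropy g := by
  refine mul_le_mul_of_nonneg_left (sum_le_sum fun ω _ => ?_) (by positivity)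
  have hf : (0 : ℝ) < fiberCard f ω := by exact_mod_cast fiberCard_pos f ω
  have hg : (0 : ℝ) < fiberCard g ω := by exact_mod_cast fiberCard_pos g ω
  have hω : (0 : ℝ) < Fintype.card Ω := by exact_mod_cast Fintype.card_pos_iff.2 ⟨ω⟩
  exact Real.log_le_log (by positivity) <| div_le_div_of_nonneg_left hω.le hg <| by
    exact_mod_cast fiberCard_le_of_factorsThrough h ω

lemma sum_inv_fiberCard_pair_le [DecidableEq α] [DecidableEq β] [DecidableEq γ]
    {f : Ω → α} {g : Ω → β} {c : Ω → γ} (hf : c.FactorsThrough f) (hg : c.FactorsThrough g)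
    (ω₁ ω₂ : Ω) :
    ∑ ω with f ω = f ω₁ ∧ g ω = g ω₂,
        ((fiberCard (fun ω => (f ω, g ω)) ω : ℝ) * fiberCard c ω)⁻¹
      ≤ if c ω₂ = c ω₁ then (fiberCard c ω₂ : ℝ)⁻¹ else 0 := by
  by_cases hne : ∃ ω₀, f ω₀ = f ω₁ ∧ g ω₀ = g ω₂
  · obtain ⟨ω₀, h₁, h₂⟩ := hne
    rw [if_pos ((hg h₂).symm.trans (hf h₁))]
    -- the joint fiber is a fiber of `(f, g)`, on which `c` is constant
    have hfib : ∀ ω, (f ω = f ω₁ ∧ g ω = g ω₂) ↔ (f ω, g ω) = (f ω₀, g ω₀) := by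
      simp [h₁, h₂]
    refine le_of_eq ?_
    rw [filter_congr fun ω _ => hfib ω, ← one_mul (fiberCard c ω₂ : ℝ)⁻¹,
      ← sum_inv_fiberCard_fiber (fun ω => (f ω, g ω)) ω₀, sum_mul]
    refine sum_congr rfl fun ω hω => ?_
    rw [mul_inv, fiberCard_congr c (hg ((Prod.ext_iff.1 (mem_filter.1 hω).2).2.trans h₂))]
  · simp only [not_exists, not_and] at hne
    rw [filter_false_of_mem fun ω _ h => hne ω h.1 h.2, sum_empty]
    split_ifs <;> positivity

lemma sum_fiberCard_mul_div_le {f : Ω → α} {g : Ω → β} {c : Ω → γ}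
    (hf : c.FactorsThrough f) (hg : c.FactorsThrough g) :
    ∑ ω, (fiberCard f ω * fiberCard g ω : ℝ) /
        (fiberCard (fun ω => (f ω, g ω)) ω * fiberCard c ω) ≤ Fintype.card Ω := by
  classical
  -- each pair `(ω₁, ω₂)` contributes `1 / |c-fiber|` at most, and only when `c ω₁ = c ω₂`
  set z : Ω → ℝ := fun ω => ((fiberCard (fun ω => (f ω, g ω)) ω : ℝ) * fiberCard c ω)⁻¹
  calc ∑ ω, (fiberCard f ω * fiberCard g ω : ℝ) /
          (fiberCard (fun ω => (f ω, g ω)) ω * fiberCard c ω)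
      = ∑ ω, ∑ x ∈ ({ω₁ | f ω₁ = f ω} : Finset Ω) ×ˢ ({ω₂ | g ω₂ = g ω} : Finset Ω), z ω := by
        refine sum_congr rfl fun ω _ => ?_
        rw [sum_const, card_product, nsmul_eq_mul, div_eq_mul_inv]
        simp [fiberCard_eq_card_filter, z]
    _ = ∑ x : Ω × Ω, ∑ ω with f ω = f x.1 ∧ g ω = g x.2, z ω :=
        sum_comm' fun ω x => by simp [eq_comm]
    _ ≤ ∑ x : Ω × Ω, if c x.2 = c x.1 then (fiberCard c x.2 : ℝ)⁻¹ else 0 :=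
        sum_le_sum fun x _ => sum_inv_fiberCard_pair_le hf hg x.1 x.2
    _ = ∑ ω₁ : Ω, ∑ ω₂ with c ω₂ = c ω₁, (fiberCard c ω₂ : ℝ)⁻¹ := by
        rw [Fintype.sum_prod_type]
        simp only [sum_ite, sum_const_zero, add_zero]
    _ = Fintype.card Ω := by
        rw [sum_congr rfl fun ω₁ _ => sum_inv_fiberCard_fiber c ω₁]
        simp

theorem uniformEntropy_pair_add_le {f : Ω → α} {g : Ω → β} {c : Ω → γ}
    (hf : c.FactorsThrough f) (hg : c.FactorsThrough g) :
    uniformEntropy (fun ω => (f ω, g ω)) + uniformEntropy c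
      ≤ uniformEntropy f + uniformEntropy g := by
  set p : Ω → α × β := fun ω => (f ω, g ω)
  set r : Ω → ℝ := fun ω =>
    (fiberCard f ω * fiberCard g ω : ℝ) / (fiberCard p ω * fiberCard c ω)
  have hr : ∀ ω, 0 < r ω := fun ω => by
    have := fiberCard_pos f ω; have := fiberCard_pos g ω
    have := fiberCard_pos p ω; have := fiberCard_pos c ω
    positivity
  have hlog : ∀ ω, Real.log (Fintype.card Ω / fiberCard p ω)
      + Real.log (Fintype.card Ω / fiberCard c ω) - Real.log (Fintype.card Ω / fiberCard f ω)
      - Real.log (Fintype.card Ω / fiberCard g ω) = Real.log (r ω) := by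
    intro ω
    have hN : (0 : ℝ) < Fintype.card Ω := Nat.cast_pos.2 (Fintype.card_pos_iff.2 ⟨ω⟩)
    have hf : (0 : ℝ) < fiberCard f ω := Nat.cast_pos.2 (fiberCard_pos f ω)
    have hg : (0 : ℝ) < fiberCard g ω := Nat.cast_pos.2 (fiberCard_pos g ω)
    have hp : (0 : ℝ) < fiberCard p ω := Nat.cast_pos.2 (fiberCard_pos p ω)
    have hc : (0 : ℝ) < fiberCard c ω := Nat.cast_pos.2 (fiberCard_pos c ω)
    rw [Real.log_div hN.ne' hp.ne', Real.log_div hN.ne' hc.ne', Real.log_div hN.ne' hf.ne',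
      Real.log_div hN.ne' hg.ne', Real.log_div (by positivity) (by positivity),
      Real.log_mul hf.ne' hg.ne', Real.log_mul hp.ne' hc.ne']
    ring
  rw [← sub_nonpos, ← sub_sub]
  calc uniformEntropy p + uniformEntropy c - uniformEntropy f - uniformEntropy g
      = (Fintype.card Ω : ℝ)⁻¹ * ∑ ω, Real.log (r ω) := by
        simp only [uniformEntropy, ← mul_add, ← mul_sub, ← sum_add_distrib, ← sum_sub_distrib,
          hlog]
    _ ≤ (Fintype.card Ω : ℝ)⁻¹ * ∑ ω, (r ω - 1) :=
        mul_le_mul_of_nonneg_left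
          (sum_le_sum fun ω _ => Real.log_le_sub_one_of_pos (hr ω)) (by positivity)
    _ ≤ 0 := by
        rw [sum_sub_distrib, sum_const, card_univ, nsmul_one]
        exact mul_nonpos_of_nonneg_of_nonpos (by positivity)
          (sub_nonpos.2 (sum_fiberCard_mul_div_le hf hg))

lemma uniformEntropy_const (a : α) : uniformEntropy (fun _ : Ω => a) = 0 := by
  classical
  simp [uniformEntropy, fiberCard_eq_card_filter]

lemma uniformEntropy_pair_le (f : Ω → α) (g : Ω → β) :
    uniformEntropy (fun ω => (f ω, g ω)) ≤ uniformEntropy f + uniformEntropy g := by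
  simpa [uniformEntropy_const] using
    uniformEntropy_pair_add_le (f := f) (g := g) (c := fun _ => ()) (fun _ _ _ => rfl)
      (fun _ _ _ => rfl)

lemma Hent_uniform_eq_uniformEntropy [Fintype α] [DecidableEq α] (f : Ω → α) :
    Hent (fun _ : Ω => (Fintype.card Ω : ℝ)⁻¹) f = uniformEntropy f := by
  rw [uniformEntropy, mul_sum, ← sum_fiberwise univ f]
  refine sum_congr rfl fun a _ => ?_
  rw [sum_congr rfl fun ω hω => by rw [fiberCard_eq_card_filter, (mem_filter.1 hω).2], sum_const,
    nsmul_eq_mul, pOf, sum_const, nsmul_eq_mul, Real.negMulLog]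
  set n : ℝ := (#{ω | f ω = a} : ℝ)
  rw [show (Fintype.card Ω : ℝ) / n = (n * (Fintype.card Ω : ℝ)⁻¹)⁻¹ by
    rw [mul_inv, inv_inv, div_eq_mul_inv, mul_comm], Real.log_inv]
  ring

lemma fiberCard_addMonoidHom {G H : Type*} [AddGroup G] [Fintype G] [AddGroup H] (φ : G →+ H)
    (g : G) : fiberCard φ g = Nat.card φ.ker :=
  Nat.card_congr (φ.fiberEquivKer g)

lemma uniformEntropy_addMonoidHom {G H : Type*} [AddGroup G] [Fintype G] [AddGroup H]
    (φ : G →+ H) (hφ : Surjective φ) : uniformEntropy φ = Real.log (Nat.card H) := by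
  have hcard : Fintype.card G = Nat.card φ.ker * Nat.card H := by
    rw [← Nat.card_eq_fintype_card, ← φ.ker.card_mul_index, AddSubgroup.index_ker,
      φ.range_eq_top.2 hφ, AddSubgroup.card_top]
  have hker : (0 : ℝ) < Nat.card φ.ker := Nat.cast_pos.2 Nat.card_pos
  simp only [uniformEntropy, fiberCard_addMonoidHom, sum_const, card_univ, nsmul_eq_mul]
  rw [inv_mul_cancel_left₀ (Nat.cast_pos.2 Fintype.card_pos).ne', hcard, Nat.cast_mul,
    mul_div_cancel_left₀ _ hker.ne']

end UniformEntropy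

section Restriction

variable {F : Type*} [Field F] {d L : ℕ}

lemma colSpan_fromCols {n₁ n₂ : Type*} [Fintype n₁] [Fintype n₂]
    (A : Matrix (Fin d) n₁ F) (B : Matrix (Fin d) n₂ F) :
    colSpan (fromCols A B) = colSpan A ⊔ colSpan B := by
  rw [colSpan, colSpan, colSpan, range_mulVecLin, range_mulVecLin, range_mulVecLin, col, col, col,
    transpose_fromCols, fromRows, ← Submodule.span_union]
  exact congrArg _ (Set.Sum.elim_range _ _)

def agreeSpace (X X' : Matrix (Fin d) (Fin L) F) : Submodule F (Fin d → F) :=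
  LinearMap.eqLocus Xᵀ.mulVecLin X'ᵀ.mulVecLin

lemma transpose_mul_eq_iff_colSpan_le {n : Type*} [Fintype n] {M : Matrix (Fin d) n F}
    {X X' : Matrix (Fin d) (Fin L) F} : Xᵀ * M = X'ᵀ * M ↔ colSpan M ≤ agreeSpace X X' := by
  simp only [colSpan, agreeSpace, LinearMap.range_le_iff_comap, Submodule.eq_top_iff',
    Submodule.mem_comap, LinearMap.mem_eqLocus, mulVecLin_apply, mulVec_mulVec]
  exact ⟨fun h w => by rw [h], fun h => mulVec_injective (funext h)⟩

/-- `X|_T`: the projections `Xᵀ v` of the data onto the directions `v ∈ T`. -/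
def restrictTo (T : Submodule F (Fin d → F)) :
    Matrix (Fin d) (Fin L) F →ₗ[F] T →ₗ[F] (Fin L → F) where
  toFun X := Xᵀ.mulVecLin.domRestrict T
  map_add' X Y := by ext; simp
  map_smul' c X := by ext; simp

lemma restrictTo_eq_iff {T : Submodule F (Fin d → F)} {X X' : Matrix (Fin d) (Fin L) F} :
    restrictTo T X = restrictTo T X' ↔ T ≤ agreeSpace X X' :=
  ⟨fun h v hv => LinearMap.congr_fun h ⟨v, hv⟩, fun h => LinearMap.ext fun v => h v.2⟩

lemma mk_restrictTo_eq_iff {𝒮 : Type*} {Φ : Matrix (Fin d) (Fin L) F → 𝒮}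
    {T : Submodule F (Fin d → F)} {X X' : Matrix (Fin d) (Fin L) F} :
    (Φ X, restrictTo T X) = (Φ X', restrictTo T X') ↔ Φ X = Φ X' ∧ T ≤ agreeSpace X X' := by
  rw [Prod.mk.injEq, restrictTo_eq_iff]

lemma restrictTo_surjective (T : Submodule F (Fin d → F)) :
    Surjective (restrictTo (L := L) T) := by
  intro g
  obtain ⟨G, rfl⟩ := LinearMap.exists_extend g
  refine ⟨(LinearMap.toMatrix' G)ᵀ, ?_⟩
  ext v
  simp [restrictTo, ← Matrix.toLin'_apply, Matrix.toLin'_toMatrix']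

lemma uniformEntropy_restrictTo [Fintype F] (T : Submodule F (Fin d → F)) :
    uniformEntropy (restrictTo (L := L) T)
      = Module.finrank F T * L * Real.log (Fintype.card F) := by
  rw [← LinearMap.toAddMonoidHom_coe, uniformEntropy_addMonoidHom _ (restrictTo_surjective T),
    Module.natCard_eq_pow_finrank (K := F), Module.finrank_linearMap, Module.finrank_fin_fun,
    Nat.card_eq_fintype_card]
  push_cast
  rw [Real.log_pow]
  push_cast
  ring

end Restriction

lemma Submodule.exists_sup_eq_finrank_add_eq {K V : Type*} [DivisionRing K] [AddCommGroup V]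
    [Module K V] [FiniteDimensional K V] {A W : Submodule K V} (hAW : A ≤ W) :
    ∃ C : Submodule K V,
      A ⊔ C = W ∧ Module.finrank K A + Module.finrank K C = Module.finrank K W := by
  obtain ⟨C, hC⟩ := A.exists_isCompl
  have hsup : A ⊔ C ⊓ W = W := by rw [← sup_inf_assoc_of_le C hAW, hC.sup_eq_top, top_inf_eq]
  have hinf : A ⊓ (C ⊓ W) = ⊥ :=
    eq_bot_iff.2 <| (inf_le_inf_left A inf_le_left).trans hC.inf_eq_bot.le
  refine ⟨C ⊓ W, hsup, ?_⟩
  rw [← Submodule.finrank_sup_add_finrank_inf_eq, hsup, hinf, finrank_bot, add_zero]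

theorem submodular_three_bound {α : Type*} [Lattice α] (h : α → ℝ)
    (hsub : ∀ a b, h (a ⊔ b) + h (a ⊓ b) ≤ h a + h b) (a b c : α) :
    h (a ⊓ b ⊔ a ⊓ c) + h (a ⊓ b ⊓ c) + h (c ⊓ (a ⊔ b)) + h (b ⊓ (a ⊔ c)) + 2 * h (a ⊔ b ⊔ c)
      ≤ 2 * (h a + h b + h c) := by
  have hab := hsub a b
  have hac := hsub a c
  have h₁ := hsub (a ⊓ b) (a ⊓ c)
  have h₂ := hsub c (a ⊔ b)
  have h₃ := hsub b (a ⊔ c)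
  rw [inf_inf_inf_comm, inf_idem, ← inf_assoc] at h₁
  rw [sup_comm] at h₂
  rw [sup_left_comm, ← sup_assoc] at h₃
  linarith

section RestrictEntropy

variable {F : Type*} [Field F] [Fintype F] {d L : ℕ} {𝒮 : Type*}

noncomputable def restrictEntropy (Φ : Matrix (Fin d) (Fin L) F → 𝒮)
    (T : Submodule F (Fin d → F)) : ℝ :=
  uniformEntropy fun X => (Φ X, restrictTo T X)

variable (Φ : Matrix (Fin d) (Fin L) F → 𝒮)

lemma restrictEntropy_mono {T T' : Submodule F (Fin d → F)} (h : T ≤ T') :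
    restrictEntropy Φ T ≤ restrictEntropy Φ T' :=
  uniformEntropy_le_of_factorsThrough fun X X' hX => by
    rw [mk_restrictTo_eq_iff] at hX ⊢
    exact ⟨hX.1, h.trans hX.2⟩

lemma restrictEntropy_sup_add_inf_le (T T' : Submodule F (Fin d → F)) :
    restrictEntropy Φ (T ⊔ T') + restrictEntropy Φ (T ⊓ T')
      ≤ restrictEntropy Φ T + restrictEntropy Φ T' := by
  refine le_trans (add_le_add_left (uniformEntropy_le_of_factorsThrough
    (g := fun X => ((Φ X, restrictTo T X), (Φ X, restrictTo T' X))) fun X X' hX => ?_) _)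
    (uniformEntropy_pair_add_le (fun X X' hX => ?_) (fun X X' hX => ?_))
  all_goals simp only [Prod.mk.injEq, restrictTo_eq_iff] at hX ⊢
  · exact ⟨hX.1.1, sup_le hX.1.2 hX.2.2⟩
  · exact ⟨hX.1, inf_le_left.trans hX.2⟩
  · exact ⟨hX.1, inf_le_right.trans hX.2⟩

lemma finrank_mul_le_restrictEntropy (T : Submodule F (Fin d → F)) :
    Module.finrank F T * L * Real.log (Fintype.card F) ≤ restrictEntropy Φ T :=
  uniformEntropy_restrictTo (L := L) T ▸
    uniformEntropy_le_of_factorsThrough fun _ _ hX => (Prod.mk.inj hX).2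

lemma restrictEntropy_sup_le (T T' : Submodule F (Fin d → F)) :
    restrictEntropy Φ (T ⊔ T')
      ≤ restrictEntropy Φ T + Module.finrank F T' * L * Real.log (Fintype.card F) := by
  calc restrictEntropy Φ (T ⊔ T')
      ≤ uniformEntropy fun X => ((Φ X, restrictTo T X), restrictTo T' X) :=
        uniformEntropy_le_of_factorsThrough fun X X' hX => by
          simp only [Prod.mk.injEq, restrictTo_eq_iff] at hX ⊢
          exact ⟨hX.1.1, sup_le hX.1.2 hX.2⟩
    _ ≤ restrictEntropy Φ T + uniformEntropy (restrictTo (L := L) T') :=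
        uniformEntropy_pair_le _ _
    _ = _ := by rw [uniformEntropy_restrictTo]

lemma restrictEntropy_le (T : Submodule F (Fin d → F)) :
    restrictEntropy Φ T
      ≤ uniformEntropy Φ + Module.finrank F T * L * Real.log (Fintype.card F) := by
  have hbot : restrictEntropy Φ ⊥ ≤ uniformEntropy Φ :=
    uniformEntropy_le_of_factorsThrough fun _ _ hX => mk_restrictTo_eq_iff.2 ⟨hX, bot_le⟩
  calc restrictEntropy Φ T = restrictEntropy Φ (⊥ ⊔ T) := by rw [bot_sup_eq]
    _ ≤ _ := restrictEntropy_sup_le Φ ⊥ T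
    _ ≤ _ := add_le_add_left hbot _

lemma restrictEntropy_add_finrank_inf_le (T W : Submodule F (Fin d → F)) :
    restrictEntropy Φ W + Module.finrank F ↥(T ⊓ W) * L * Real.log (Fintype.card F)
      ≤ restrictEntropy Φ T + Module.finrank F W * L * Real.log (Fintype.card F) := by
  obtain ⟨C, hsup, hrank⟩ := Submodule.exists_sup_eq_finrank_add_eq (inf_le_right : T ⊓ W ≤ W)
  have hW : W ≤ T ⊔ C := hsup ▸ sup_le_sup_right inf_le_left C
  have hrank' : (Module.finrank F ↥(T ⊓ W) : ℝ) + Module.finrank F C = Module.finrank F W := by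
    exact_mod_cast hrank
  have := (restrictEntropy_mono Φ hW).trans (restrictEntropy_sup_le Φ T C)
  rw [← hrank']
  linarith

end RestrictEntropy

section Users

variable {F : Type*} [Field F] [Fintype F] {d L m m' : ℕ} {𝒮 : Type*}
  (Φ : Matrix (Fin d) (Fin L) F → 𝒮) {V : Matrix (Fin d) (Fin m) F}
  {V' : Matrix (Fin d) (Fin m') F} {Ψ : 𝒮 → Matrix (Fin L) (Fin m') F → Matrix (Fin L) (Fin m) F}

lemma restrictEntropy_colSpan_fromCols
    (hdec : ∀ X : Matrix (Fin d) (Fin L) F, Ψ (Φ X) (Xᵀ * V') = Xᵀ * V) :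
    restrictEntropy Φ (colSpan (fromCols V' V)) = restrictEntropy Φ (colSpan V') := by
  refine le_antisymm (uniformEntropy_le_of_factorsThrough fun X X' hX => ?_)
    (restrictEntropy_mono Φ (colSpan_fromCols V' V ▸ le_sup_left))
  rw [mk_restrictTo_eq_iff] at hX ⊢
  obtain ⟨hΦ, hV'⟩ := hX
  refine ⟨hΦ, colSpan_fromCols V' V ▸ sup_le hV' ?_⟩
  rw [← transpose_mul_eq_iff_colSpan_le] at hV' ⊢
  rw [← hdec, ← hdec, hΦ, hV']

lemma restrictEntropy_colSpan_fromCols_add_le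
    (hdec : ∀ X : Matrix (Fin d) (Fin L) F, Ψ (Φ X) (Xᵀ * V') = Xᵀ * V)
    (T : Submodule F (Fin d → F)) :
    restrictEntropy Φ (colSpan (fromCols V' V))
        + Module.finrank F ↥(T ⊓ colSpan V') * L * Real.log (Fintype.card F)
      ≤ restrictEntropy Φ T + V'.rank * L * Real.log (Fintype.card F) :=
  restrictEntropy_colSpan_fromCols Φ hdec ▸ restrictEntropy_add_finrank_inf_le Φ T _

lemma restrictEntropy_colSpan_fromCols_le
    (hdec : ∀ X : Matrix (Fin d) (Fin L) F, Ψ (Φ X) (Xᵀ * V') = Xᵀ * V) :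
    restrictEntropy Φ (colSpan (fromCols V' V))
      ≤ uniformEntropy Φ + V'.rank * L * Real.log (Fintype.card F) :=
  restrictEntropy_colSpan_fromCols Φ hdec ▸ restrictEntropy_le Φ _

end Users

theorem lcbc_converse_delta_two_general
    {F : Type*} [Field F] [Fintype F]
    {d L m₁ m₂ m₃ m₁' m₂' m₃' : ℕ}
    (V₁ : Matrix (Fin d) (Fin m₁) F)
    (V₂ : Matrix (Fin d) (Fin m₂) F)
    (V₃ : Matrix (Fin d) (Fin m₃) F)
    (V₁' : Matrix (Fin d) (Fin m₁') F)
    (V₂' : Matrix (Fin d) (Fin m₂') F)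
    (V₃' : Matrix (Fin d) (Fin m₃') F)
    (𝒮 : Type*) [Fintype 𝒮] [DecidableEq 𝒮]
    (Φ : Matrix (Fin d) (Fin L) F → 𝒮)
    (Ψ₁ : 𝒮 → Matrix (Fin L) (Fin m₁') F → Matrix (Fin L) (Fin m₁) F)
    (Ψ₂ : 𝒮 → Matrix (Fin L) (Fin m₂') F → Matrix (Fin L) (Fin m₂) F)
    (Ψ₃ : 𝒮 → Matrix (Fin L) (Fin m₃') F → Matrix (Fin L) (Fin m₃) F)
    (hdec₁ : ∀ X : Matrix (Fin d) (Fin L) F, Ψ₁ (Φ X) (Xᵀ * V₁') = Xᵀ * V₁)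
    (hdec₂ : ∀ X : Matrix (Fin d) (Fin L) F, Ψ₂ (Φ X) (Xᵀ * V₂') = Xᵀ * V₂)
    (hdec₃ : ∀ X : Matrix (Fin d) (Fin L) F, Ψ₃ (Φ X) (Xᵀ * V₃') = Xᵀ * V₃) :
    ((max (max
        (Module.finrank F ↥(colSpan (Matrix.fromCols V₁' V₁)
          ⊓ colSpan (Matrix.fromCols V₂' V₂)
          ⊓ colSpan (Matrix.fromCols V₃' V₃) ⊓ colSpan V₁'))
        (Module.finrank F ↥(colSpan (Matrix.fromCols V₁' V₁)
          ⊓ colSpan (Matrix.fromCols V₂' V₂)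
          ⊓ colSpan (Matrix.fromCols V₃' V₃) ⊓ colSpan V₂')))
        (Module.finrank F ↥(colSpan (Matrix.fromCols V₁' V₁)
          ⊓ colSpan (Matrix.fromCols V₂' V₂)
          ⊓ colSpan (Matrix.fromCols V₃' V₃) ⊓ colSpan V₃')) : ℝ)) * (L : ℝ)
    + ((Module.finrank F ↥(((colSpan (Matrix.fromCols V₁' V₁)
            ⊓ colSpan (Matrix.fromCols V₂' V₂))
          ⊔ (colSpan (Matrix.fromCols V₁' V₁)
            ⊓ colSpan (Matrix.fromCols V₃' V₃))) ⊓ colSpan V₁') : ℝ)) * (L : ℝ)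
    + ((Module.finrank F ↥(colSpan (Matrix.fromCols V₃' V₃)
          ⊓ (colSpan (Matrix.fromCols V₁' V₁) ⊔ colSpan (Matrix.fromCols V₂' V₂))
          ⊓ colSpan V₃') : ℝ)) * (L : ℝ)
    + ((Module.finrank F ↥(colSpan (Matrix.fromCols V₂' V₂)
          ⊓ (colSpan (Matrix.fromCols V₁' V₁) ⊔ colSpan (Matrix.fromCols V₃' V₃))
          ⊓ colSpan V₂') : ℕ) : ℝ) * (L : ℝ)
    + 2 * (L : ℝ) * ((Module.finrank F ↥(colSpan (Matrix.fromCols V₁' V₁)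
          ⊔ colSpan (Matrix.fromCols V₂' V₂)
          ⊔ colSpan (Matrix.fromCols V₃' V₃)) : ℕ) : ℝ)
    - 2 * (L : ℝ) * ((V₁'.rank : ℝ) + (V₂'.rank : ℝ) + (V₃'.rank : ℝ))
    ≤ 2 * (Hent (fun _ : Matrix (Fin d) (Fin L) F =>
          ((Fintype.card (Matrix (Fin d) (Fin L) F) : ℝ))⁻¹) Φ
        / Real.log (Fintype.card F)) := by
  set u₁ := colSpan (Matrix.fromCols V₁' V₁)
  set u₂ := colSpan (Matrix.fromCols V₂' V₂)
  set u₃ := colSpan (Matrix.fromCols V₃' V₃)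
  have hsub := submodular_three_bound _ (restrictEntropy_sup_add_inf_le Φ) u₁ u₂ u₃
  have hE := finrank_mul_le_restrictEntropy (L := L) Φ (u₁ ⊔ u₂ ⊔ u₃)
  have hB := restrictEntropy_colSpan_fromCols_add_le Φ hdec₁ (u₁ ⊓ u₂ ⊔ u₁ ⊓ u₃)
  have hC := restrictEntropy_colSpan_fromCols_add_le Φ hdec₃ (u₃ ⊓ (u₁ ⊔ u₂))
  have hD := restrictEntropy_colSpan_fromCols_add_le Φ hdec₂ (u₂ ⊓ (u₁ ⊔ u₃))
  have hT₁ := restrictEntropy_colSpan_fromCols_add_le Φ hdec₁ (u₁ ⊓ u₂ ⊓ u₃)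
  have hT₂ := restrictEntropy_colSpan_fromCols_add_le Φ hdec₂ (u₁ ⊓ u₂ ⊓ u₃)
  have hT₃ := restrictEntropy_colSpan_fromCols_add_le Φ hdec₃ (u₁ ⊓ u₂ ⊓ u₃)
  have hS₁ := restrictEntropy_colSpan_fromCols_le Φ hdec₁
  have hS₂ := restrictEntropy_colSpan_fromCols_le Φ hdec₂
  have hS₃ := restrictEntropy_colSpan_fromCols_le Φ hdec₃
  have hq : 0 < Real.log (Fintype.card F) := Real.log_pos (by exact_mod_cast Fintype.one_lt_card)
  rw [Hent_uniform_eq_uniformEntropy, mul_div_assoc', le_div_iff₀ hq]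
  rcases max_choice (max (Module.finrank F ↥(u₁ ⊓ u₂ ⊓ u₃ ⊓ colSpan V₁') : ℝ)
      (Module.finrank F ↥(u₁ ⊓ u₂ ⊓ u₃ ⊓ colSpan V₂') : ℝ))
      (Module.finrank F ↥(u₁ ⊓ u₂ ⊓ u₃ ⊓ colSpan V₃') : ℝ) with h | h <;> rw [h]
  · rcases max_choice (Module.finrank F ↥(u₁ ⊓ u₂ ⊓ u₃ ⊓ colSpan V₁') : ℝ)
        (Module.finrank F ↥(u₁ ⊓ u₂ ⊓ u₃ ⊓ colSpan V₂') : ℝ) with h | h <;> rw [h]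
    · linear_combination hsub + hB + hT₁ + hC + hD + 2 * hE + hS₂ + hS₃
    · linear_combination hsub + hB + hT₂ + hC + hD + 2 * hE + hS₁ + hS₃
  · linear_combination hsub + hB + hT₃ + hC + hD + 2 * hE + hS₁ + hS₂

/-- Functional-submodularity converse bound `Δ* ≥ Δ₂^{123}` for the
3-user LCBC. With `U_k = ⟨[V_k', V_k]⟩`, `U₁₂₃ = U₁∩U₂∩U₃`, `U_{ij} = U_i∩U_j`,
i.i.d. uniform data `X ∈ F_q^{d×L}` and any valid broadcast `S = Φ(X)`,
`2H(S) ≥ max_ℓ rk(U₁₂₃∩V_ℓ')·L + rk((U₁₂+U₁₃)∩V₁')·L + rk(U₃∩(U₁+U₂)∩V₃')·L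
+ rk(U₂∩(U₁+U₃)∩V₂')·L + 2L·rk(U₁+U₂+U₃) − 2L·(rk V₁'+rk V₂'+rk V₃')`
in q-ary units. -/
theorem lcbc_converse_delta_two
    {F : Type*} [Field F] [Fintype F] [DecidableEq F]
    {d L m₁ m₂ m₃ m₁' m₂' m₃' : ℕ}
    (V₁ : Matrix (Fin d) (Fin m₁) F)
    (V₂ : Matrix (Fin d) (Fin m₂) F)
    (V₃ : Matrix (Fin d) (Fin m₃) F)
    (V₁' : Matrix (Fin d) (Fin m₁') F)
    (V₂' : Matrix (Fin d) (Fin m₂') F)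
    (V₃' : Matrix (Fin d) (Fin m₃') F)
    (𝒮 : Type*) [Fintype 𝒮] [DecidableEq 𝒮]
    (Φ : Matrix (Fin d) (Fin L) F → 𝒮)
    (Ψ₁ : 𝒮 → Matrix (Fin L) (Fin m₁') F → Matrix (Fin L) (Fin m₁) F)
    (Ψ₂ : 𝒮 → Matrix (Fin L) (Fin m₂') F → Matrix (Fin L) (Fin m₂) F)
    (Ψ₃ : 𝒮 → Matrix (Fin L) (Fin m₃') F → Matrix (Fin L) (Fin m₃) F)
    (hdec₁ : ∀ X : Matrix (Fin d) (Fin L) F, Ψ₁ (Φ X) (Xᵀ * V₁') = Xᵀ * V₁)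
    (hdec₂ : ∀ X : Matrix (Fin d) (Fin L) F, Ψ₂ (Φ X) (Xᵀ * V₂') = Xᵀ * V₂)
    (hdec₃ : ∀ X : Matrix (Fin d) (Fin L) F, Ψ₃ (Φ X) (Xᵀ * V₃') = Xᵀ * V₃) :
    ((max (max
        (Module.finrank F ↥(colSpan (Matrix.fromCols V₁' V₁)
          ⊓ colSpan (Matrix.fromCols V₂' V₂)
          ⊓ colSpan (Matrix.fromCols V₃' V₃) ⊓ colSpan V₁'))
        (Module.finrank F ↥(colSpan (Matrix.fromCols V₁' V₁)
          ⊓ colSpan (Matrix.fromCols V₂' V₂)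
          ⊓ colSpan (Matrix.fromCols V₃' V₃) ⊓ colSpan V₂')))
        (Module.finrank F ↥(colSpan (Matrix.fromCols V₁' V₁)
          ⊓ colSpan (Matrix.fromCols V₂' V₂)
          ⊓ colSpan (Matrix.fromCols V₃' V₃) ⊓ colSpan V₃')) : ℝ)) * (L : ℝ)
    + ((Module.finrank F ↥(((colSpan (Matrix.fromCols V₁' V₁)
            ⊓ colSpan (Matrix.fromCols V₂' V₂))
          ⊔ (colSpan (Matrix.fromCols V₁' V₁)
            ⊓ colSpan (Matrix.fromCols V₃' V₃))) ⊓ colSpan V₁') : ℝ)) * (L : ℝ)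
    + ((Module.finrank F ↥(colSpan (Matrix.fromCols V₃' V₃)
          ⊓ (colSpan (Matrix.fromCols V₁' V₁) ⊔ colSpan (Matrix.fromCols V₂' V₂))
          ⊓ colSpan V₃') : ℝ)) * (L : ℝ)
    + ((Module.finrank F ↥(colSpan (Matrix.fromCols V₂' V₂)
          ⊓ (colSpan (Matrix.fromCols V₁' V₁) ⊔ colSpan (Matrix.fromCols V₃' V₃))
          ⊓ colSpan V₂') : ℕ) : ℝ) * (L : ℝ)
    + 2 * (L : ℝ) * ((Module.finrank F ↥(colSpan (Matrix.fromCols V₁' V₁)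
          ⊔ colSpan (Matrix.fromCols V₂' V₂)
          ⊔ colSpan (Matrix.fromCols V₃' V₃)) : ℕ) : ℝ)
    - 2 * (L : ℝ) * ((V₁'.rank : ℝ) + (V₂'.rank : ℝ) + (V₃'.rank : ℝ))
    ≤ 2 * (Hent (fun _ : Matrix (Fin d) (Fin L) F =>
          ((Fintype.card (Matrix (Fin d) (Fin L) F) : ℝ))⁻¹) Φ
        / Real.log (Fintype.card F)) :=
  lcbc_converse_delta_two_general V₁ V₂ V₃ V₁' V₂' V₃' 𝒮 Φ Ψ₁ Ψ₂ Ψ₃ hdec₁ hdec₂ hdec₃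
end
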